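/- arXiv:1310.1930 — 7 statements merged into one kernel-verified Lean document; each statement's English description precedes it below -/
import Mathlib

section
/- Let C be a real n×n matrix, π ∈ ℝⁿ, r ∈ ℝ, and set s = πᵀ(I+C)π. If s ≥ 0, then the set of eigenvalues of the block matrix B = [[0, (I+C)π],[πᵀ, r]] is contained in {0, (r + √(r²+4s))/2, (r − √(r²+4s))/2}. -/
open Matrix Polynomial

theorem eigenvalues_block_matrix (n : ℕ)
    (C : Matrix (Fin n) (Fin n) ℝ) (π : Fin n → ℝ) (r : ℝ)
    (s : ℝ) (hs : s = π ⬝ᵥ ((1 + C) *ᵥ π)) (hs0 : 0 ≤ s)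
    (B : Matrix (Fin n ⊕ Fin 1) (Fin n ⊕ Fin 1) ℝ)
    (hB : B = Matrix.fromBlocks 0 (Matrix.replicateCol (Fin 1) ((1 + C) *ᵥ π))
      (Matrix.replicateRow (Fin 1) π) (Matrix.of fun _ _ => r)) :
    spectrum ℂ (B.map (algebraMap ℝ ℂ)) ⊆
      {(0 : ℂ), (((r + Real.sqrt (r ^ 2 + 4 * s)) / 2 : ℝ) : ℂ),
        (((r - Real.sqrt (r ^ 2 + 4 * s)) / 2 : ℝ) : ℂ)} := by
  -- the key matrix identity B³ = r B² + s B
  have hkey : B * B * B = r • (B * B) + s • B := by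
    subst hB
    ext (i|i) (j|j) <;>
      simp [Matrix.mul_apply, Fintype.sum_sum_type, dotProduct, hs, Finset.sum_mul,
        Finset.mul_sum, mul_comm, mul_assoc, mul_left_comm] <;>
      first | ring1 | (rw [mul_add, Finset.mul_sum]; ring1)
  set Bc : Matrix (Fin n ⊕ Fin 1) (Fin n ⊕ Fin 1) ℂ := B.map (algebraMap ℝ ℂ) with hBc
  have hkeyC : Bc * Bc * Bc = (r : ℂ) • (Bc * Bc) + (s : ℂ) • Bc := by
    rw [hBc]
    calc B.map (algebraMap ℝ ℂ) * B.map (algebraMap ℝ ℂ) * B.map (algebraMap ℝ ℂ)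
        = (B * B * B).map (algebraMap ℝ ℂ) := by
          rw [Matrix.map_mul, Matrix.map_mul]
      _ = (r • (B * B) + s • B).map (algebraMap ℝ ℂ) := by rw [hkey]
      _ = (r : ℂ) • (B.map (algebraMap ℝ ℂ) * B.map (algebraMap ℝ ℂ))
            + (s : ℂ) • B.map (algebraMap ℝ ℂ) := by
          ext i j
          simp only [Matrix.mul_apply, Matrix.map_apply, Matrix.add_apply,
            Matrix.smul_apply, Fintype.sum_sum_type, Finset.univ_unique,
            Finset.sum_singleton, smul_eq_mul, map_add, _root_.map_mul, map_sum,
            Complex.real_smul, Complex.ofReal_mul, Complex.ofReal_add]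
          simp [Complex.coe_algebraMap, mul_add, Finset.mul_sum]
  -- roots
  set a : ℝ := (r + Real.sqrt (r ^ 2 + 4 * s)) / 2 with ha
  set b : ℝ := (r - Real.sqrt (r ^ 2 + 4 * s)) / 2 with hb
  have hsq : Real.sqrt (r ^ 2 + 4 * s) ^ 2 = r ^ 2 + 4 * s :=
    Real.sq_sqrt (by positivity)
  have hab : a + b = r := by rw [ha, hb]; ring
  have hmul : a * b = -s := by
    rw [ha, hb]
    have : (r + Real.sqrt (r ^ 2 + 4 * s)) / 2 * ((r - Real.sqrt (r ^ 2 + 4 * s)) / 2)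
        = (r ^ 2 - Real.sqrt (r ^ 2 + 4 * s) ^ 2) / 4 := by ring
    rw [this, hsq]; ring
  set p : ℂ[X] := X * (X - Polynomial.C (a : ℂ)) * (X - Polynomial.C (b : ℂ)) with hp
  have haeval : aeval Bc p = 0 := by
    have e1 : aeval Bc p = Bc * (Bc - (a : ℂ) • 1) * (Bc - (b : ℂ) • 1) := by
      simp only [hp, _root_.map_mul, map_sub, aeval_X, aeval_C, Algebra.algebraMap_eq_smul_one]
    have e2 : Bc * (Bc - (a : ℂ) • 1) * (Bc - (b : ℂ) • 1)
        = Bc * Bc * Bc - ((a : ℂ) + (b : ℂ)) • (Bc * Bc) + ((a : ℂ) * (b : ℂ)) • Bc := by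
      simp only [mul_sub, sub_mul, Matrix.mul_smul, Matrix.smul_mul, mul_one, add_smul,
        smul_smul]
      module
    rw [e1, e2, hkeyC]
    have h2 : ((a : ℂ) + (b : ℂ)) = (r : ℂ) := by
      rw [← Complex.ofReal_add, hab]
    have h3 : ((a : ℂ) * (b : ℂ)) = -(s : ℂ) := by
      rw [← Complex.ofReal_mul, hmul, Complex.ofReal_neg]
    rw [h2, h3]
    module
  intro μ hμ
  have hmem : eval μ p ∈ spectrum ℂ (aeval Bc p) :=
    spectrum.subset_polynomial_aeval Bc p ⟨μ, hμ, rfl⟩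
  rw [haeval, spectrum.zero_eq] at hmem
  have : μ * (μ - (a : ℂ)) * (μ - (b : ℂ)) = 0 := by
    simpa [hp] using hmem
  simp only [Set.mem_insert_iff, Set.mem_singleton_iff, ← ha, ← hb]
  rcases mul_eq_zero.mp this with h | h
  · rcases mul_eq_zero.mp h with h | h
    · exact Or.inl h
    · exact Or.inr (Or.inl (by rw [sub_eq_zero] at h; exact h))
  · exact Or.inr (Or.inr (by rw [sub_eq_zero] at h; exact h))
end

section
/- Let C be the adjacency matrix of a finite simple undirected graph G on n vertices, let r ∈ [0,1), and let π be a vector in the standard simplex Δ = {π ∈ ℝⁿ : π ≥ 0, Σπᵢ = 1}. Then the spectral radius of the block matrix B_π = [[0, (I+C)π],[πᵀ, r]] is strictly less than 1 if and only if πᵀ(I+C)π < 1 − r. -/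
open Matrix

lemma mem_spec_iff {m : Type*} [Fintype m] [DecidableEq m] (M : Matrix m m ℂ) (μ : ℂ) :
    μ ∈ spectrum ℂ M ↔ ∃ v ≠ 0, M *ᵥ v = μ • v := by
  have key : ∀ v : m → ℂ, (algebraMap ℂ (Matrix m m ℂ)) μ *ᵥ v = μ • v := by
    intro v
    rw [Matrix.algebraMap_eq_diagonal]
    ext i
    simp [Matrix.mulVec_diagonal, Pi.algebraMap_apply]
  rw [spectrum.mem_iff, Matrix.isUnit_iff_isUnit_det, isUnit_iff_ne_zero, not_not,
    ← Matrix.exists_mulVec_eq_zero_iff]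
  constructor
  · rintro ⟨v, hv, h⟩
    refine ⟨v, hv, ?_⟩
    rw [Matrix.sub_mulVec, key, sub_eq_zero] at h
    exact h.symm
  · rintro ⟨v, hv, h⟩
    exact ⟨v, hv, by rw [Matrix.sub_mulVec, key, h, sub_self]⟩

theorem spectral_radius_lt_one_iff (n : ℕ) (G : SimpleGraph (Fin n)) [DecidableRel G.Adj]
    (C : Matrix (Fin n) (Fin n) ℝ) (hC : C = G.adjMatrix ℝ)
    (r : ℝ) (hr0 : 0 ≤ r) (hr1 : r < 1)
    (π : Fin n → ℝ) (hπ : π ∈ stdSimplex ℝ (Fin n))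
    (B : Matrix (Fin n ⊕ Fin 1) (Fin n ⊕ Fin 1) ℝ)
    (hB : B = Matrix.fromBlocks 0 (Matrix.replicateCol (Fin 1) ((1 + C) *ᵥ π))
      (Matrix.replicateRow (Fin 1) π) (Matrix.of fun _ _ => r)) :
    (∀ μ ∈ spectrum ℂ (B.map (algebraMap ℝ ℂ)), ‖μ‖ < 1) ↔
      π ⬝ᵥ ((1 + C) *ᵥ π) < 1 - r := by
  set u : Fin n → ℝ := (1 + C) *ᵥ π with hu
  set s : ℝ := π ⬝ᵥ u with hs
  -- nonnegativity of s
  have hπ0 : ∀ i, 0 ≤ π i := fun i => hπ.1 i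
  have hu0 : ∀ i, 0 ≤ u i := by
    intro i
    rw [hu]
    simp only [Matrix.mulVec, dotProduct]
    apply Finset.sum_nonneg
    intro j _
    apply mul_nonneg _ (hπ0 j)
    rw [Matrix.add_apply, Matrix.one_apply, hC, SimpleGraph.adjMatrix_apply]
    split_ifs <;> norm_num
  have hs0 : 0 ≤ s := Finset.sum_nonneg fun i _ => mul_nonneg (hπ0 i) (hu0 i)
  -- cast of s
  have hscast : ((s : ℂ)) = ∑ j, (π j : ℂ) * (u j : ℂ) := by
    rw [hs, dotProduct]
    push_cast
    rfl
  -- row computations for the mapped matrix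
  have hrow1 : ∀ (x : Fin n ⊕ Fin 1 → ℂ) (i : Fin n),
      ((B.map (algebraMap ℝ ℂ)) *ᵥ x) (Sum.inl i) = (u i : ℂ) * x (Sum.inr 0) := by
    intro x i
    simp [Matrix.mulVec, dotProduct, Fintype.sum_sum_type, hB]
  have hrow2 : ∀ (x : Fin n ⊕ Fin 1 → ℂ) (k : Fin 1),
      ((B.map (algebraMap ℝ ℂ)) *ᵥ x) (Sum.inr k)
        = (∑ j, (π j : ℂ) * x (Sum.inl j)) + (r : ℂ) * x (Sum.inr 0) := by
    intro x k
    simp [Matrix.mulVec, dotProduct, Fintype.sum_sum_type, hB]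
  constructor
  · -- spectral radius < 1 → s < 1 - r
    intro H
    by_contra hcon
    push_neg at hcon   -- 1 - r ≤ s
    have hs1 : 0 < s := lt_of_lt_of_le (by linarith) hcon
    set δ : ℝ := Real.sqrt (r ^ 2 + 4 * s) with hδ
    have hδ2 : δ ^ 2 = r ^ 2 + 4 * s := Real.sq_sqrt (by positivity)
    have hδpos : 0 < δ := Real.sqrt_pos.mpr (by positivity)
    set μp : ℝ := (r + δ) / 2 with hμp
    have hμppos : 0 < μp := by positivity
    have hquad : μp ^ 2 = r * μp + s := by
      rw [hμp]; linear_combination hδ2 / 4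
    have hμp1 : 1 ≤ μp := by nlinarith [hquad, hcon, hμppos]
    have hμpne : (μp : ℂ) ≠ 0 := by exact_mod_cast hμppos.ne'
    -- eigenvector
    set x : Fin n ⊕ Fin 1 → ℂ :=
      Sum.elim (fun i => (u i : ℂ) / (μp : ℂ)) (fun _ => 1) with hx
    have hxne : x ≠ 0 := by
      intro h0
      have := congrFun h0 (Sum.inr 0)
      simp [hx] at this
    have heig : (B.map (algebraMap ℝ ℂ)) *ᵥ x = (μp : ℂ) • x := by
      ext j
      cases j with
      | inl i =>
        rw [hrow1]
        simp only [hx, Sum.elim_inl, Sum.elim_inr, Pi.smul_apply, smul_eq_mul, mul_one]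
        field_simp
      | inr k =>
        rw [hrow2]
        simp [hx]
        have : (∑ j, (π j : ℂ) * ((u j : ℂ) / (μp : ℂ))) = (s : ℂ) / (μp : ℂ) := by
          rw [hscast, Finset.sum_div]
          congr 1
          ext j
          ring
        rw [this]
        have hq : (μp : ℂ) ^ 2 = (r : ℂ) * (μp : ℂ) + (s : ℂ) := by exact_mod_cast hquad
        field_simp
        linear_combination -hq
    have hmem : (μp : ℂ) ∈ spectrum ℂ (B.map (algebraMap ℝ ℂ)) :=
      (mem_spec_iff _ _).mpr ⟨x, hxne, heig⟩
    have := H _ hmem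
    rw [Complex.norm_real, Real.norm_eq_abs, abs_of_pos hμppos] at this
    linarith
  · -- s < 1 - r → spectral radius < 1
    intro h μ hμ
    obtain ⟨x, hxne, heig⟩ := (mem_spec_iff _ _).mp hμ
    by_cases hμ0 : μ = 0
    · simp [hμ0]
    set t : ℂ := x (Sum.inr 0) with ht
    have hrow1' : ∀ i, (u i : ℂ) * t = μ * x (Sum.inl i) := by
      intro i
      have := congrFun heig (Sum.inl i)
      rw [hrow1] at this
      simpa using this
    have hlast : (∑ j, (π j : ℂ) * x (Sum.inl j)) + (r : ℂ) * t = μ * t := by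
      have := congrFun heig (Sum.inr 0)
      rw [hrow2] at this
      simpa using this
    have htne : t ≠ 0 := by
      intro ht0
      apply hxne
      funext j
      cases j with
      | inl i =>
        have := hrow1' i
        rw [ht0, mul_zero] at this
        have := (mul_eq_zero.mp this.symm).resolve_left hμ0
        simpa using this
      | inr k =>
        have : k = 0 := Subsingleton.elim _ _
        rw [this]
        simpa using ht0
    -- derive quadratic
    have hv : ∀ i, x (Sum.inl i) = (u i : ℂ) * t / μ := by
      intro i
      field_simp
      linear_combination -(hrow1' i)
    have hsum : (∑ j, (π j : ℂ) * x (Sum.inl j)) = (s : ℂ) * t / μ := by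
      rw [hscast, Finset.sum_mul, Finset.sum_div]
      congr 1
      ext j
      rw [hv j]
      ring
    rw [hsum] at hlast
    have hkey : μ ^ 2 = (r : ℂ) * μ + (s : ℂ) := by
      have h1 : (s : ℂ) * t + (r : ℂ) * t * μ = μ ^ 2 * t := by
        field_simp at hlast
        linear_combination t * hlast
      have h2 : ((s : ℂ) + (r : ℂ) * μ - μ ^ 2) * t = 0 := by linear_combination h1
      rcases mul_eq_zero.mp h2 with h3 | h3
      · linear_combination -h3
      · exact absurd h3 htne
    -- norm bound
    have hm : ‖μ‖ ^ 2 ≤ r * ‖μ‖ + s := by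
      calc ‖μ‖ ^ 2 = ‖μ ^ 2‖ := by rw [norm_pow]
        _ = ‖(r : ℂ) * μ + (s : ℂ)‖ := by rw [hkey]
        _ ≤ ‖(r : ℂ) * μ‖ + ‖(s : ℂ)‖ := norm_add_le _ _
        _ = r * ‖μ‖ + s := by
            rw [norm_mul, Complex.norm_real, Complex.norm_real, Real.norm_eq_abs,
              Real.norm_eq_abs, abs_of_nonneg hr0, abs_of_nonneg hs0]
    by_contra hge
    push_neg at hge
    nlinarith [hm, h, hge, hr0, hs0, hr1, norm_nonneg μ,
      mul_nonneg (sub_nonneg.2 hr1.le) (sub_nonneg.2 hge)]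
end

section
/- (Motzkin–Straus, independent-set form) Let G be a finite simple graph on n ≥ 1 vertices with adjacency matrix C, and let α(G) be the maximum size of an independent set of G. Then the minimum over the standard simplex Δ = {y ∈ ℝⁿ : y ≥ 0, Σyᵢ = 1} of the quadratic form yᵀ(I+C)y equals 1/α(G). -/
open Matrix Finset

private lemma MS_sum_ite_const {ι : Type*} (s : Finset ι) (p : Prop) [Decidable p] (f : ι → ℝ) :
    ∑ i ∈ s, (if p then f i else 0) = if p then ∑ i ∈ s, f i else 0 := by
  split <;> simp

private lemma MS_shift_eq {n : ℕ} (M : Matrix (Fin n) (Fin n) ℝ) (hs : ∀ i j, M i j = M j i)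
    (y : Fin n → ℝ) (u v : Fin n) (d : ℝ) :
    (∑ i, ∑ j, M i j * ((y i + (if i = u then d else 0) - (if i = v then d else 0)) *
        (y j + (if j = u then d else 0) - (if j = v then d else 0))))
    = (∑ i, ∑ j, M i j * (y i * y j))
      + 2*d*((∑ j, M u j * y j) - (∑ j, M v j * y j))
      + d^2*(M u u + M v v - 2 * M u v) := by
  have expand : ∀ i j, M i j * ((y i + (if i = u then d else 0) - (if i = v then d else 0)) *
        (y j + (if j = u then d else 0) - (if j = v then d else 0)))
      = M i j * (y i * y j)
        + ((M i j * y i) * (if j = u then d else 0) - (M i j * y i) * (if j = v then d else 0))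
        + ((M i j * y j) * (if i = u then d else 0) - (M i j * y j) * (if i = v then d else 0))
        + (M i j * ((if i = u then d else 0) * (if j = u then d else 0))
           - M i j * ((if i = u then d else 0) * (if j = v then d else 0))
           - M i j * ((if i = v then d else 0) * (if j = u then d else 0))
           + M i j * ((if i = v then d else 0) * (if j = v then d else 0))) := by
    intro i j; ring
  simp only [expand]
  simp only [Finset.sum_add_distrib, Finset.sum_sub_distrib]
  simp only [mul_ite, mul_zero, mul_one, ite_mul, zero_mul, MS_sum_ite_const,
    Finset.sum_ite_eq, Finset.sum_ite_eq', Finset.mem_univ, if_true]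
  simp only [← Finset.sum_mul]
  have h1 : ∀ w : Fin n, ∑ i, M i w * y i = ∑ j, M w j * y j := by
    intro w; apply Finset.sum_congr rfl; intro i _; rw [hs]
  rw [h1 u, h1 v, hs v u]
  ring

private lemma MS_diag_sum {n : ℕ} (G : SimpleGraph (Fin n)) [DecidableRel G.Adj]
    (M : Matrix (Fin n) (Fin n) ℝ)
    (hM : ∀ i j, M i j = (if i = j then 1 else 0) + (if G.Adj i j then 1 else 0))
    (y : Fin n → ℝ)
    (hind : ∀ i j, y i ≠ 0 → y j ≠ 0 → i ≠ j → ¬ G.Adj i j) :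
    ∑ i, ∑ j, M i j * (y i * y j) = ∑ i, (y i)^2 := by
  have hpt : ∀ i j : Fin n, M i j * (y i * y j) = if j = i then (y i)^2 else 0 := by
    intro i j
    by_cases hij : j = i
    · subst hij
      rw [hM]
      simp [G.irrefl, sq]
    · simp only [if_neg hij]
      by_cases hyi : y i = 0
      · simp [hyi]
      by_cases hyj : y j = 0
      · simp [hyj]
      · rw [hM]
        have : ¬ G.Adj i j := hind i j hyi hyj (fun h => hij h.symm)
        simp [Ne.symm hij, this]
  simp only [hpt, Finset.sum_ite_eq, Finset.sum_ite_eq', Finset.mem_univ, if_true]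

private lemma MS_lower {n : ℕ} (G : SimpleGraph (Fin n)) [DecidableRel G.Adj]
    (M : Matrix (Fin n) (Fin n) ℝ)
    (hM : ∀ i j, M i j = (if i = j then 1 else 0) + (if G.Adj i j then 1 else 0))
    (α : ℕ) (hα0 : 0 < α)
    (hub : ∀ s : Finset (Fin n),
      (↑s : Set (Fin n)).Pairwise (fun a b => ¬ G.Adj a b) → s.card ≤ α) :
    ∀ m : ℕ, ∀ y : Fin n → ℝ, y ∈ stdSimplex ℝ (Fin n) →
      (Finset.univ.filter fun i => y i ≠ 0).card ≤ m →
      (1:ℝ)/α ≤ ∑ i, ∑ j, M i j * (y i * y j) := by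
  have hsymm : ∀ i j, M i j = M j i := by
    intro i j
    rw [hM, hM]
    rw [if_congr (Iff.intro Eq.symm Eq.symm) rfl rfl, if_congr (G.adj_comm i j) rfl rfl]
  intro m
  induction m with
  | zero =>
    intro y hy hcard
    exfalso
    have hempty : (Finset.univ.filter fun i => y i ≠ 0) = ∅ :=
      Finset.card_eq_zero.mp (Nat.le_zero.mp hcard)
    have hzero : ∀ i, y i = 0 := by
      intro i
      by_contra h
      have : i ∈ (Finset.univ.filter fun i => y i ≠ 0) := by simp [h]
      simp [hempty] at this
    have := hy.2
    simp [hzero] at this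
  | succ m ih =>
    intro y hy hcard
    set s := (Finset.univ.filter fun i => y i ≠ 0) with hs
    by_cases hcase : ∃ u ∈ s, ∃ v ∈ s, u ≠ v ∧ G.Adj u v
    · -- there is an edge inside the support: shift weight
      have key : ∀ u v : Fin n, u ∈ s → v ∈ s → u ≠ v → G.Adj u v →
          (∑ j, M u j * y j) ≤ (∑ j, M v j * y j) →
          (1:ℝ)/α ≤ ∑ i, ∑ j, M i j * (y i * y j) := by
        intro u v hu hv huv hadj hR
        set d := y v with hd
        have hdpos : 0 < d := by
          have : y v ≠ 0 := by simpa [hs] using hv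
          exact lt_of_le_of_ne (hy.1 v) (Ne.symm this)
        set w : Fin n → ℝ :=
          fun i => y i + (if i = u then d else 0) - (if i = v then d else 0) with hw
        have hwv : w v = 0 := by simp [hw, Ne.symm huv, hd]
        have hwu : w u = y u + d := by simp [hw, huv]
        have hwo : ∀ i, i ≠ u → i ≠ v → w i = y i := by
          intro i h1 h2; simp [hw, h1, h2]
        have hwmem : w ∈ stdSimplex ℝ (Fin n) := by
          constructor
          · intro i
            by_cases h2 : i = v
            · rw [h2, hwv]
            · by_cases h1 : i = u
              · rw [h1, hwu]
                have := hy.1 u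
                linarith
              · rw [hwo i h1 h2]
                exact hy.1 i
          · have : ∑ i, w i = (∑ i, y i) + d - d := by
              simp [hw, Finset.sum_add_distrib, Finset.sum_sub_distrib, Finset.sum_ite_eq']
            rw [this, hy.2]; ring
        have hsub : (Finset.univ.filter fun i => w i ≠ 0) ⊆ s.erase v := by
          intro i hi
          simp only [Finset.mem_filter, Finset.mem_univ, true_and] at hi
          rw [Finset.mem_erase]
          constructor
          · intro h; rw [h] at hi; exact hi hwv
          · by_cases h1 : i = u
            · rw [h1]; exact hu
            · by_cases h2 : i = v
              · rw [h2] at hi; exact absurd hwv hi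
              · simp only [hs, Finset.mem_filter, Finset.mem_univ, true_and]
                rw [← hwo i h1 h2]; exact hi
        have hwcard : (Finset.univ.filter fun i => w i ≠ 0).card ≤ m := by
          have h1 := Finset.card_le_card hsub
          have h2 : (s.erase v).card = s.card - 1 := Finset.card_erase_of_mem hv
          have h3 : 1 ≤ s.card := Finset.card_pos.mpr ⟨v, hv⟩
          omega
        have hQw := ih w hwmem hwcard
        have hshift := MS_shift_eq M hsymm y u v d
        have hMuu : M u u = 1 := by rw [hM]; simp [G.irrefl]
        have hMvv : M v v = 1 := by rw [hM]; simp [G.irrefl]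
        have hMuv : M u v = 1 := by rw [hM]; simp [huv, hadj]
        rw [hMuu, hMvv, hMuv] at hshift
        simp only [hw] at hQw
        rw [hshift] at hQw
        nlinarith [hQw, hdpos.le, hR]
      obtain ⟨u, hu, v, hv, huv, hadj⟩ := hcase
      rcases le_total (∑ j, M u j * y j) (∑ j, M v j * y j) with h | h
      · exact key u v hu hv huv hadj h
      · exact key v u hv hu (Ne.symm huv) ((G.adj_comm u v).mp hadj) h
    · -- support is independent: Cauchy-Schwarz
      push_neg at hcase
      have hind : ∀ i j : Fin n, y i ≠ 0 → y j ≠ 0 → i ≠ j → ¬ G.Adj i j := by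
        intro i j hi hj hij
        exact hcase i (by simp [hs, hi]) j (by simp [hs, hj]) hij
      rw [MS_diag_sum G M hM y hind]
      have hpair : (↑s : Set (Fin n)).Pairwise (fun a b => ¬ G.Adj a b) := by
        intro a ha b hb hab
        simp only [hs, Finset.coe_filter, Set.mem_setOf_eq] at ha hb
        exact hind a b ha.2 hb.2 hab
      have hcardα : s.card ≤ α := hub s hpair
      have hsum1 : ∑ i ∈ s, y i = 1 := by
        rw [hs, Finset.sum_filter_ne_zero, hy.2]
      have hcs : (∑ i ∈ s, y i)^2 ≤ (s.card : ℝ) * ∑ i ∈ s, (y i)^2 :=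
        sq_sum_le_card_mul_sum_sq
      rw [hsum1, one_pow] at hcs
      have hle : ∑ i ∈ s, (y i)^2 ≤ ∑ i, (y i)^2 :=
        Finset.sum_le_sum_of_subset_of_nonneg (Finset.filter_subset _ _)
          (fun i _ _ => sq_nonneg _)
      have hq_nonneg : (0:ℝ) ≤ ∑ i ∈ s, (y i)^2 :=
        Finset.sum_nonneg fun i _ => sq_nonneg _
      have hαr : (0:ℝ) < α := by exact_mod_cast hα0
      rw [div_le_iff₀ hαr]
      calc (1:ℝ) ≤ (s.card : ℝ) * ∑ i ∈ s, (y i)^2 := hcs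
        _ ≤ (α : ℝ) * ∑ i ∈ s, (y i)^2 := by
              apply mul_le_mul_of_nonneg_right _ hq_nonneg
              exact_mod_cast hcardα
        _ ≤ (α : ℝ) * ∑ i, (y i)^2 := mul_le_mul_of_nonneg_left hle hαr.le
        _ = (∑ i, (y i)^2) * α := by ring

theorem motzkin_straus_indep (n : ℕ) (hn : 1 ≤ n)
    (G : SimpleGraph (Fin n)) [DecidableRel G.Adj]
    (C : Matrix (Fin n) (Fin n) ℝ) (hC : C = G.adjMatrix ℝ)
    (α : ℕ)
    (hα : IsGreatest {k : ℕ | ∃ s : Finset (Fin n), s.card = k ∧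
      (↑s : Set (Fin n)).Pairwise fun a b => ¬ G.Adj a b} α) :
    IsLeast {x : ℝ | ∃ y ∈ stdSimplex ℝ (Fin n), x = y ⬝ᵥ ((1 + C) *ᵥ y)} (1 / α) := by
  have hM : ∀ i j, (1 + C) i j = (if i = j then 1 else 0) + (if G.Adj i j then 1 else 0) := by
    intro i j
    simp [hC, Matrix.add_apply, Matrix.one_apply, SimpleGraph.adjMatrix_apply]
  have hα1 : 1 ≤ α := by
    apply hα.2
    refine ⟨{⟨0, hn⟩}, by simp, ?_⟩
    simp [Set.pairwise_singleton]
  have hα0 : 0 < α := hα1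
  have hαr : (0:ℝ) < α := by exact_mod_cast hα0
  have quad : ∀ z : Fin n → ℝ, z ⬝ᵥ ((1 + C) *ᵥ z) = ∑ i, ∑ j, (1 + C) i j * (z i * z j) := by
    intro z
    simp only [dotProduct, mulVec, Finset.mul_sum]
    exact Finset.sum_congr rfl fun i _ => Finset.sum_congr rfl fun j _ => by ring
  constructor
  · -- membership
    obtain ⟨s, hcard, hind⟩ := hα.1
    refine ⟨fun i => if i ∈ s then (α:ℝ)⁻¹ else 0, ⟨?_, ?_⟩, ?_⟩
    · intro i; dsimp only; split
      · positivity
      · exact le_rfl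
    · dsimp only
      rw [Finset.sum_ite_mem, Finset.univ_inter, Finset.sum_const, hcard, nsmul_eq_mul]
      field_simp
    · rw [quad]
      rw [MS_diag_sum G (1 + C) hM _ ?_]
      · have hsq : ∀ i : Fin n, ((if i ∈ s then (α:ℝ)⁻¹ else 0))^2
            = if i ∈ s then (α:ℝ)⁻¹^2 else 0 := by
          intro i; split <;> simp
        simp only [hsq]
        rw [Finset.sum_ite_mem, Finset.univ_inter, Finset.sum_const, hcard, nsmul_eq_mul]
        field_simp
      · intro i j hi hj hij
        have hi' : i ∈ s := by by_contra h; simp [h] at hi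
        have hj' : j ∈ s := by by_contra h; simp [h] at hj
        exact hind (Finset.mem_coe.mpr hi') (Finset.mem_coe.mpr hj') hij
  · -- lower bound
    rintro x ⟨y, hy, rfl⟩
    rw [quad]
    have hub : ∀ s : Finset (Fin n),
        (↑s : Set (Fin n)).Pairwise (fun a b => ¬ G.Adj a b) → s.card ≤ α := by
      intro s hp
      exact hα.2 ⟨s, rfl, hp⟩
    exact MS_lower G (1 + C) hM α hα0 hub n y hy
      (le_trans (Finset.card_le_card (Finset.filter_subset _ _)) (by simp))
end

section
/- Let G be a finite simple graph on n vertices with adjacency matrix C, and let j ≥ 2 be an integer. There exists a vector π in the standard simplex Δ ⊂ ℝⁿ with πᵀ(I+C)π < 1/(j−1) if and only if G has an independent set of size at least j. -/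
open Matrix Finset

namespace IndepAux

variable {n : ℕ} (G : SimpleGraph (Fin n)) [DecidableRel G.Adj]

private def A (G : SimpleGraph (Fin n)) [DecidableRel G.Adj] :
    Matrix (Fin n) (Fin n) ℝ := 1 + G.adjMatrix ℝ

lemma A_nonneg (i k : Fin n) : 0 ≤ A G i k := by
  simp only [A, Matrix.add_apply, Matrix.one_apply, SimpleGraph.adjMatrix_apply]
  split_ifs <;> norm_num

lemma A_diag (i : Fin n) : A G i i = 1 := by
  simp [A, Matrix.add_apply, Matrix.one_apply]

lemma A_adj {u v : Fin n} (h : G.Adj u v) : A G u v = 1 := by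
  simp [A, Matrix.add_apply, Matrix.one_apply, h.ne, h]

lemma A_nonadj {u v : Fin n} (hne : u ≠ v) (h : ¬ G.Adj u v) : A G u v = 0 := by
  simp [A, Matrix.add_apply, Matrix.one_apply, hne, h]

lemma dot_swap (x y : Fin n → ℝ) : x ⬝ᵥ (A G *ᵥ y) = y ⬝ᵥ (A G *ᵥ x) := by
  rw [Matrix.dotProduct_mulVec, ← Matrix.mulVec_transpose]
  have hsymm : (A G)ᵀ = A G := by
    simp [A, Matrix.transpose_add, SimpleGraph.transpose_adjMatrix]
  rw [hsymm, dotProduct_comm]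

lemma quad_expand (x : Fin n → ℝ) :
    x ⬝ᵥ (A G *ᵥ x) = ∑ i, ∑ k, x i * (A G i k * x k) := by
  simp [dotProduct, mulVec, Finset.mul_sum]

lemma sum_sq_le (x : Fin n → ℝ) (hx : ∀ i, 0 ≤ x i) :
    ∑ i, x i ^ 2 ≤ x ⬝ᵥ (A G *ᵥ x) := by
  rw [quad_expand]
  refine Finset.sum_le_sum fun i _ => ?_
  have h1 : x i ^ 2 = x i * (A G i i * x i) := by rw [A_diag G i]; ring
  rw [h1]
  exact Finset.single_le_sum (f := fun k => x i * (A G i k * x k))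
    (fun k _ => mul_nonneg (hx i) (mul_nonneg (A_nonneg G i k) (hx k)))
    (Finset.mem_univ i)

lemma step (x : Fin n → ℝ) (hx : x ∈ stdSimplex ℝ (Fin n)) (u v : Fin n)
    (huv : G.Adj u v) (hxu : x u ≠ 0) (hxv : x v ≠ 0)
    (hle : (A G *ᵥ x) v ≤ (A G *ᵥ x) u) :
    ∃ y ∈ stdSimplex ℝ (Fin n), y ⬝ᵥ (A G *ᵥ y) ≤ x ⬝ᵥ (A G *ᵥ x) ∧
      (univ.filter fun i => y i ≠ 0) ⊆ (univ.filter fun i => x i ≠ 0).erase u := by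
  have hne : u ≠ v := huv.ne
  have hc0 : 0 ≤ x u := hx.1 u
  set d : Fin n → ℝ := x u • (Pi.single v 1 - Pi.single u 1) with hd
  have hdu : d u = -(x u) := by
    rw [hd]; simp [Pi.single_eq_of_ne hne]
  have hdv : d v = x u := by
    rw [hd]; simp [Pi.single_eq_of_ne (Ne.symm hne)]
  have hdi : ∀ i, i ≠ u → i ≠ v → d i = 0 := by
    intro i h1 h2
    rw [hd]; simp [Pi.single_eq_of_ne h1, Pi.single_eq_of_ne h2]
  have hyval : ∀ i, (x + d) i = if i = u then 0 else if i = v then x v + x u else x i := by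
    intro i
    rcases eq_or_ne i u with h1 | h1
    · rw [if_pos h1, Pi.add_apply, h1, hdu]; ring
    rcases eq_or_ne i v with h2 | h2
    · rw [if_neg h1, if_pos h2, Pi.add_apply, h2, hdv]
    · rw [if_neg h1, if_neg h2, Pi.add_apply, hdi i h1 h2, add_zero]
  refine ⟨x + d, ⟨?_, ?_⟩, ?_, ?_⟩
  · intro i
    rw [hyval i]
    split_ifs with h1 h2
    · exact le_refl 0
    · have h3 := hx.1 v; have h4 := hx.1 u; linarith
    · exact hx.1 i
  · have hsum : ∑ i, d i = 0 := by
      rw [hd]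
      simp only [Pi.smul_apply, Pi.sub_apply, smul_eq_mul, mul_sub]
      rw [Finset.sum_sub_distrib, ← Finset.mul_sum, ← Finset.mul_sum,
        Fintype.sum_pi_single', Fintype.sum_pi_single']
      ring
    have hx2 := hx.2
    simp only [Pi.add_apply, Finset.sum_add_distrib, hsum, hx2, add_zero]
  · have hexp : (x + d) ⬝ᵥ (A G *ᵥ (x + d)) =
        x ⬝ᵥ (A G *ᵥ x) + x ⬝ᵥ (A G *ᵥ d) + (d ⬝ᵥ (A G *ᵥ x) + d ⬝ᵥ (A G *ᵥ d)) := by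
      rw [Matrix.mulVec_add, add_dotProduct, dotProduct_add,
        dotProduct_add]
    have hswap : x ⬝ᵥ (A G *ᵥ d) = d ⬝ᵥ (A G *ᵥ x) := dot_swap G x d
    have hdAx : d ⬝ᵥ (A G *ᵥ x) = x u * ((A G *ᵥ x) v - (A G *ᵥ x) u) := by
      rw [hd]
      rw [smul_dotProduct, sub_dotProduct, single_dotProduct,
        single_dotProduct]
      simp [mul_sub]
    have hdAd : d ⬝ᵥ (A G *ᵥ d) = 0 := by
      have hAv : A G *ᵥ Pi.single v (1:ℝ) = fun i => A G i v := by
        funext i; rw [Matrix.mulVec_single]; simp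
      have hAu : A G *ᵥ Pi.single u (1:ℝ) = fun i => A G i u := by
        funext i; rw [Matrix.mulVec_single]; simp
      rw [hd, Matrix.mulVec_smul, Matrix.mulVec_sub, hAv, hAu]
      simp only [smul_dotProduct, dotProduct_smul, smul_eq_mul,
        sub_dotProduct, dotProduct_sub, single_dotProduct,
        Pi.sub_apply, one_mul]
      rw [A_diag G v, A_diag G u, A_adj G huv, A_adj G huv.symm]
      ring
    rw [hexp, hswap, hdAx, hdAd]
    nlinarith [mul_nonneg hc0 (sub_nonneg.mpr hle)]
  · intro i hi
    simp only [Finset.mem_filter, Finset.mem_univ, true_and] at hi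
    rw [hyval i] at hi
    split_ifs at hi with h1 h2
    · exact absurd rfl hi
    · rw [h2]
      exact Finset.mem_erase.mpr ⟨Ne.symm hne, by simp [hxv]⟩
    · exact Finset.mem_erase.mpr ⟨h1, by simp [hi]⟩

lemma forward (j : ℕ) (hj : 2 ≤ j) :
    ∀ m : ℕ, ∀ x : Fin n → ℝ, x ∈ stdSimplex ℝ (Fin n) →
      (univ.filter fun i => x i ≠ 0).card ≤ m →
      x ⬝ᵥ (A G *ᵥ x) < 1 / ((j : ℝ) - 1) →
      ∃ s : Finset (Fin n), j ≤ s.card ∧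
        (↑s : Set (Fin n)).Pairwise fun a b => ¬ G.Adj a b := by
  intro m
  induction m with
  | zero =>
    intro x hx hcard hQ
    exfalso
    have hall : ∀ i, x i = 0 := by
      intro i
      by_contra h
      have : i ∈ univ.filter fun i => x i ≠ 0 := by simp [h]
      have := Finset.card_pos.mpr ⟨i, this⟩
      omega
    have := hx.2
    simp [hall] at this
  | succ m ih =>
    intro x hx hcard hQ
    set S := univ.filter fun i => x i ≠ 0 with hS
    have hj1 : (0:ℝ) < (j:ℝ) - 1 := by
      have : (2:ℝ) ≤ (j:ℝ) := by exact_mod_cast hj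
      linarith
    by_cases hind : (↑S : Set (Fin n)).Pairwise fun a b => ¬ G.Adj a b
    · refine ⟨S, ?_, hind⟩
      have hsum1 : ∑ i ∈ S, x i = 1 := by
        rw [hS, Finset.sum_filter_ne_zero]; exact hx.2
      have hcs : (1:ℝ) ≤ S.card * ∑ i ∈ S, x i ^ 2 := by
        have := sq_sum_le_card_mul_sum_sq (s := S) (f := x)
        rw [hsum1] at this; simpa using this
      have hle2 : ∑ i ∈ S, x i ^ 2 ≤ x ⬝ᵥ (A G *ᵥ x) :=
        le_trans (Finset.sum_le_sum_of_subset_of_nonneg (Finset.subset_univ S)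
          (fun i _ _ => sq_nonneg _)) (sum_sq_le G x hx.1)
      have hScard : 0 < S.card := by
        by_contra h
        push_neg at h
        interval_cases hSc : S.card
        · rw [Finset.card_eq_zero] at hSc
          rw [hSc] at hsum1; simp at hsum1
      have hc1 : (1:ℝ) ≤ (S.card : ℝ) := by exact_mod_cast hScard
      have hub : (1:ℝ) ≤ S.card * (x ⬝ᵥ (A G *ᵥ x)) := by
        calc (1:ℝ) ≤ S.card * ∑ i ∈ S, x i ^ 2 := hcs
        _ ≤ S.card * (x ⬝ᵥ (A G *ᵥ x)) := by
            apply mul_le_mul_of_nonneg_left hle2; positivity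
      have hcpos : (0:ℝ) < (S.card : ℝ) := by linarith
      have hQc : 1 / (S.card : ℝ) ≤ x ⬝ᵥ (A G *ᵥ x) := by
        rw [div_le_iff₀ hcpos]
        linarith [hub, mul_comm ((S.card : ℝ)) (x ⬝ᵥ (A G *ᵥ x))]
      have hreal : (j:ℝ) - 1 < S.card :=
        lt_of_one_div_lt_one_div hcpos (lt_of_le_of_lt hQc hQ)
      have : (j:ℝ) < S.card + 1 := by linarith
      have : j < S.card + 1 := by exact_mod_cast this
      omega
    · rw [Set.Pairwise] at hind
      push_neg at hind
      obtain ⟨u, hu, v, hv, hne, hadj⟩ := hind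
      have huS : u ∈ S := by simpa using hu
      have hvS : v ∈ S := by simpa using hv
      have hxu : x u ≠ 0 := (Finset.mem_filter.mp huS).2
      have hxv : x v ≠ 0 := (Finset.mem_filter.mp hvS).2
      have hcard' : ∀ w, w ∈ S → ∀ y : Fin n → ℝ,
          (univ.filter fun i => y i ≠ 0) ⊆ S.erase w →
          (univ.filter fun i => y i ≠ 0).card ≤ m := by
        intro w hw y hsub
        have h1 := Finset.card_le_card hsub
        have h2 : (S.erase w).card = S.card - 1 := Finset.card_erase_of_mem hw
        omega
      rcases le_total ((A G *ᵥ x) v) ((A G *ᵥ x) u) with h | h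
      · obtain ⟨y, hy, hQ', hsub⟩ := step G x hx u v hadj hxu hxv h
        exact ih y hy (hcard' u huS y hsub) (lt_of_le_of_lt hQ' hQ)
      · obtain ⟨y, hy, hQ', hsub⟩ := step G x hx v u hadj.symm hxv hxu h
        exact ih y hy (hcard' v hvS y hsub) (lt_of_le_of_lt hQ' hQ)

lemma backward (j : ℕ) (hj : 2 ≤ j) (s : Finset (Fin n)) (hcard : j ≤ s.card)
    (hind : (↑s : Set (Fin n)).Pairwise fun a b => ¬ G.Adj a b) :
    ∃ π ∈ stdSimplex ℝ (Fin n), π ⬝ᵥ (A G *ᵥ π) < 1 / ((j : ℝ) - 1) := by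
  have hs0 : 0 < s.card := by omega
  set c : ℝ := (s.card : ℝ) with hcdef
  have hc0 : (0:ℝ) < c := by rw [hcdef]; exact_mod_cast hs0
  set x : Fin n → ℝ := fun i => if i ∈ s then 1 / c else 0 with hxdef
  have hxmem : x ∈ stdSimplex ℝ (Fin n) := by
    constructor
    · intro i; rw [hxdef]; dsimp only; split_ifs <;> positivity
    · rw [hxdef]
      rw [Finset.sum_ite_mem, Finset.univ_inter, Finset.sum_const, nsmul_eq_mul]
      field_simp; exact hcdef.symm
  have hrow : ∀ i ∈ s, ∑ k ∈ s, A G i k = 1 := by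
    intro i hi
    rw [← Finset.add_sum_erase _ _ hi, A_diag G i]
    have h0 : ∑ k ∈ s.erase i, A G i k = 0 := by
      refine Finset.sum_eq_zero fun k hk => ?_
      have hki : k ≠ i := Finset.ne_of_mem_erase hk
      have hks : k ∈ s := Finset.mem_of_mem_erase hk
      exact A_nonadj G hki.symm (hind hi hks hki.symm)
    rw [h0, add_zero]
  have hQ : x ⬝ᵥ (A G *ᵥ x) = 1 / c := by
    rw [quad_expand]
    have h1 : ∀ i, ∑ k, x i * (A G i k * x k) = ∑ k ∈ s, x i * (A G i k * (1/c)) := by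
      intro i
      rw [← Finset.sum_subset (Finset.subset_univ s)]
      · refine Finset.sum_congr rfl fun k hk => ?_
        rw [hxdef]; simp [hk]
      · intro k _ hk
        have : x k = 0 := by rw [hxdef]; simp [hk]
        rw [this]; ring
    have h2 : ∑ i, ∑ k, x i * (A G i k * x k)
        = ∑ i ∈ s, ∑ k ∈ s, (1/c) * (A G i k * (1/c)) := by
      rw [← Finset.sum_subset (Finset.subset_univ s)]
      · refine Finset.sum_congr rfl fun i hi => ?_
        rw [h1 i]
        refine Finset.sum_congr rfl fun k _ => ?_
        have : x i = 1 / c := by rw [hxdef]; simp [hi]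
        rw [this]
      · intro i _ hi
        have : x i = 0 := by rw [hxdef]; simp [hi]
        refine Finset.sum_eq_zero fun k _ => by rw [this]; ring
    rw [h2]
    have h3 : ∀ i ∈ s, ∑ k ∈ s, (1/c) * (A G i k * (1/c)) = 1/c * (1/c) := by
      intro i hi
      rw [← Finset.mul_sum, ← Finset.sum_mul, hrow i hi]
      ring
    rw [Finset.sum_congr rfl h3, Finset.sum_const, nsmul_eq_mul]
    field_simp; exact hcdef.symm
  refine ⟨x, hxmem, ?_⟩
  rw [hQ]
  have hjc : (j:ℝ) ≤ c := by
    rw [hcdef]; exact_mod_cast hcard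
  have hj1 : (0:ℝ) < (j:ℝ) - 1 := by
    have : (2:ℝ) ≤ (j:ℝ) := by exact_mod_cast hj
    linarith
  apply one_div_lt_one_div_of_lt hj1
  linarith

end IndepAux

theorem indep_set_iff_quadratic_form (n : ℕ) (G : SimpleGraph (Fin n)) [DecidableRel G.Adj]
    (C : Matrix (Fin n) (Fin n) ℝ) (hC : C = G.adjMatrix ℝ)
    (j : ℕ) (hj : 2 ≤ j) :
    (∃ π ∈ stdSimplex ℝ (Fin n), π ⬝ᵥ ((1 + C) *ᵥ π) < 1 / ((j : ℝ) - 1)) ↔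
      ∃ s : Finset (Fin n), j ≤ s.card ∧
        (↑s : Set (Fin n)).Pairwise fun a b => ¬ G.Adj a b := by
  subst hC
  have hA : (1 + G.adjMatrix ℝ) = IndepAux.A G := rfl
  rw [hA]
  constructor
  · rintro ⟨π, hπ, hQ⟩
    exact IndepAux.forward G j hj _ π hπ le_rfl hQ
  · rintro ⟨s, hcard, hind⟩
    exact IndepAux.backward G j hj s hcard hind
end

section
/- Let G be a finite simple graph on n vertices with adjacency matrix C, columns c₁,…,cₙ, and let j ≥ 2 be an integer. Define r = 1 − 1/(j−1) and the (n+1)×(n+1) matrices Aᵢ = [[0, eᵢ + cᵢ],[eᵢᵀ, r]] for i = 1,…,n. Then there exists a matrix in the convex hull of {A₁,…,Aₙ} with spectral radius strictly less than 1 if and only if G has an independent set of size at least j. -/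
open Matrix Finset

section Helpers

variable {n : ℕ}

private lemma spec_iff' {m : Type*} [Fintype m] [DecidableEq m] (B : Matrix m m ℂ) (μ : ℂ) :
    μ ∈ spectrum ℂ B ↔ ∃ v, v ≠ 0 ∧ B *ᵥ v = μ • v := by
  rw [spectrum.mem_iff, Algebra.algebraMap_eq_smul_one, Matrix.isUnit_iff_isUnit_det,
    isUnit_iff_ne_zero, not_ne_iff, ← Matrix.exists_mulVec_eq_zero_iff]
  constructor
  · rintro ⟨v, hv, h⟩
    refine ⟨v, hv, ?_⟩
    rw [Matrix.sub_mulVec, Matrix.smul_mulVec, Matrix.one_mulVec, sub_eq_zero] at h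
    exact h.symm
  · rintro ⟨v, hv, h⟩
    exact ⟨v, hv, by rw [Matrix.sub_mulVec, Matrix.smul_mulVec, Matrix.one_mulVec, h,
      sub_self]⟩

private lemma quad_bound' (r q : ℝ) (hr0 : 0 ≤ r) (hq0 : 0 < q) (hq1 : q < 1 - r) (μ : ℂ)
    (h : μ ^ 2 = (r : ℂ) * μ + (q : ℂ)) : ‖μ‖ < 1 := by
  rw [Complex.ext_iff] at h
  obtain ⟨h1, h2⟩ := h
  simp [pow_two, Complex.mul_re, Complex.mul_im] at h1 h2
  set a := μ.re with ha'; set b := μ.im with hb'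
  have hb : b = 0 := by
    by_contra hb
    have h2a : 2 * a = r := by
      have : b * (2 * a - r) = 0 := by ring_nf; ring_nf at h2; linarith
      rcases mul_eq_zero.mp this with h | h
      · exact absurd h hb
      · linarith
    nlinarith [sq_nonneg b]
  have hmu : μ = (a : ℂ) := Complex.ext rfl (by simp [← hb', hb])
  rw [hmu, Complex.norm_real, Real.norm_eq_abs, abs_lt]
  constructor <;> nlinarith [h1, hb]

private lemma Q_ge_sq' (G : SimpleGraph (Fin n)) [DecidableRel G.Adj] (x : Fin n → ℝ)
    (hx : ∀ i, 0 ≤ x i) : ∑ i, x i ^ 2 ≤ x ⬝ᵥ (1 + G.adjMatrix ℝ) *ᵥ x := by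
  rw [Matrix.add_mulVec, Matrix.one_mulVec, dotProduct_add]
  have h1 : x ⬝ᵥ x = ∑ i, x i ^ 2 := by simp [dotProduct, pow_two]
  have h2 : 0 ≤ x ⬝ᵥ (G.adjMatrix ℝ *ᵥ x) := by
    simp only [Matrix.mulVec, dotProduct]
    refine Finset.sum_nonneg fun i _ => mul_nonneg (hx i) ?_
    refine Finset.sum_nonneg fun k _ => mul_nonneg ?_ (hx k)
    by_cases h : G.Adj i k <;> simp [h]
  linarith

private lemma shift_step' (G : SimpleGraph (Fin n)) [DecidableRel G.Adj] (x : Fin n → ℝ)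
    (hx : x ∈ stdSimplex ℝ (Fin n)) (u v : Fin n) (huv : u ≠ v) (hadj : G.Adj u v)
    (hv : x v ≠ 0)
    (hle : ((1 + G.adjMatrix ℝ) *ᵥ x) v ≤ ((1 + G.adjMatrix ℝ) *ᵥ x) u) :
    ∃ y : Fin n → ℝ, y ∈ stdSimplex ℝ (Fin n) ∧ y u = 0 ∧
      (∀ i, y i ≠ 0 → x i ≠ 0) ∧
      y ⬝ᵥ (1 + G.adjMatrix ℝ) *ᵥ y ≤ x ⬝ᵥ (1 + G.adjMatrix ℝ) *ᵥ x := by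
  obtain ⟨hx0, hx1⟩ := hx
  set M := (1 + G.adjMatrix ℝ) with hM
  set d : Fin n → ℝ := Pi.single v 1 - Pi.single u 1 with hd
  set c := x u with hc
  set y : Fin n → ℝ := x + c • d with hy
  have hyu : y u = 0 := by
    simp [hy, hd, Pi.single_apply, huv.symm, hc]
  have hyv : y v = x v + c := by
    simp [hy, hd, Pi.single_apply, huv, hc]
  have hyi : ∀ i, i ≠ u → i ≠ v → y i = x i := by
    intro i hiu hiv
    simp [hy, hd, Pi.single_apply, hiu, hiv]
  refine ⟨y, ⟨?_, ?_⟩, hyu, ?_, ?_⟩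
  · intro i
    rcases eq_or_ne i u with rfl | hiu
    · rw [hyu]
    rcases eq_or_ne i v with rfl | hiv
    · rw [hyv]; exact add_nonneg (hx0 _) (hx0 _)
    · rw [hyi i hiu hiv]; exact hx0 i
  · have : ∑ i, y i = ∑ i, x i + c * ∑ i, d i := by
      simp [hy, Finset.sum_add_distrib, Finset.mul_sum]
    have hdsum : ∑ i, d i = 0 := by
      simp [hd, Finset.sum_sub_distrib]
    rw [this, hdsum, mul_zero, add_zero, hx1]
  · intro i hi
    rcases eq_or_ne i u with rfl | hiu
    · exact absurd hyu hi
    rcases eq_or_ne i v with rfl | hiv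
    · exact hv
    · rwa [hyi i hiu hiv] at hi
  · have hsymm : Mᵀ = M := by
      rw [hM, Matrix.transpose_add, Matrix.transpose_one, SimpleGraph.transpose_adjMatrix]
    have hswap : ∀ w z : Fin n → ℝ, w ⬝ᵥ M *ᵥ z = z ⬝ᵥ M *ᵥ w := by
      intro w z
      rw [Matrix.dotProduct_mulVec, ← Matrix.mulVec_transpose, hsymm, dotProduct_comm]
    have hdMx : d ⬝ᵥ M *ᵥ x = (M *ᵥ x) v - (M *ᵥ x) u := by
      simp [hd, sub_dotProduct, single_dotProduct]
    have hdMd : d ⬝ᵥ M *ᵥ d = 0 := by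
      have h1 : M v v = 1 := by simp [hM, Matrix.one_apply]
      have h2 : M u u = 1 := by simp [hM, Matrix.one_apply]
      have h3 : M v u = 1 := by simp [hM, Matrix.one_apply, huv.symm, hadj.symm]
      have h4 : M u v = 1 := by simp [hM, Matrix.one_apply, huv, hadj]
      simp only [hd, Matrix.mulVec_sub, Matrix.mulVec_single, sub_dotProduct,
        dotProduct_sub, single_dotProduct, Pi.sub_apply, mul_one, one_mul,
        MulOpposite.op_one, one_smul, Matrix.col_apply]
      rw [h1, h2, h3, h4]; ring
    have hexp : y ⬝ᵥ M *ᵥ y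
        = x ⬝ᵥ M *ᵥ x + 2 * c * ((M *ᵥ x) v - (M *ᵥ x) u) + c ^ 2 * (d ⬝ᵥ M *ᵥ d) := by
      rw [hy]
      simp only [add_dotProduct, Matrix.mulVec_add, dotProduct_add,
        Matrix.mulVec_smul, smul_dotProduct, dotProduct_smul, smul_eq_mul,
        hswap x d, hdMx]
      ring
    have hc0 : 0 ≤ c := hx0 u
    rw [hexp, hdMd]
    nlinarith

private lemma descent' (G : SimpleGraph (Fin n)) [DecidableRel G.Adj] :
    ∀ (N : ℕ) (x : Fin n → ℝ), x ∈ stdSimplex ℝ (Fin n) →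
      (Finset.univ.filter fun i => x i ≠ 0).card ≤ N →
      ∃ s : Finset (Fin n), s.Nonempty ∧
        ((↑s : Set (Fin n)).Pairwise fun a b => ¬ G.Adj a b) ∧
        ((s.card : ℝ))⁻¹ ≤ x ⬝ᵥ (1 + G.adjMatrix ℝ) *ᵥ x := by
  intro N
  induction N with
  | zero =>
    intro x hx hcard
    exfalso
    have he : (Finset.univ.filter fun i => x i ≠ 0) = ∅ :=
      Finset.card_eq_zero.mp (Nat.le_zero.mp hcard)
    have hall : ∀ i, x i = 0 := by
      intro i
      by_contra hi
      have hmem : i ∈ Finset.univ.filter fun i => x i ≠ 0 := by simp [hi]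
      rw [he] at hmem
      exact absurd hmem (Finset.notMem_empty i)
    have h2 := hx.2
    rw [Finset.sum_congr rfl fun i _ => hall i] at h2
    simp at h2
  | succ N ih =>
    intro x hx hcard
    set s := Finset.univ.filter fun i => x i ≠ 0 with hs
    by_cases hindep : (↑s : Set (Fin n)).Pairwise fun a b => ¬ G.Adj a b
    · refine ⟨s, ?_, hindep, ?_⟩
      · rw [Finset.nonempty_iff_ne_empty]
        intro he
        have hall : ∀ i, x i = 0 := by
          intro i
          by_contra hi
          have : i ∈ s := by simp [hs, hi]
          simp [he] at this
        have := hx.2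
        simp [hall] at this
      · have hsum : ∑ i ∈ s, x i = 1 := by
          rw [hs, Finset.sum_filter_ne_zero, hx.2]
        have hcs : (1 : ℝ) ≤ (s.card : ℝ) * ∑ i ∈ s, x i ^ 2 := by
          have := sq_sum_le_card_mul_sum_sq (s := s) (f := x)
          rw [hsum] at this
          simpa using this
        have hle2 : ∑ i ∈ s, x i ^ 2 ≤ ∑ i, x i ^ 2 :=
          Finset.sum_le_sum_of_subset_of_nonneg (Finset.subset_univ s)
            (fun i _ _ => sq_nonneg _)
        have hQ := Q_ge_sq' G x hx.1
        have hspos : (0:ℝ) < s.card := by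
          by_contra h
          push_neg at h
          have : s.card = 0 := by exact_mod_cast le_antisymm h (by positivity)
          rw [this] at hcs; simp at hcs; linarith
        rw [inv_le_iff_one_le_mul₀ (by positivity)]
        calc (1:ℝ) ≤ s.card * ∑ i ∈ s, x i ^ 2 := hcs
          _ ≤ s.card * (x ⬝ᵥ (1 + G.adjMatrix ℝ) *ᵥ x) := by
              apply mul_le_mul_of_nonneg_left (le_trans hle2 hQ) (le_of_lt hspos)
          _ = (x ⬝ᵥ (1 + G.adjMatrix ℝ) *ᵥ x) * s.card := by ring
    · rw [Set.Pairwise] at hindep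
      push_neg at hindep
      obtain ⟨a, ha, b, hb, hab, hadj⟩ := hindep
      have hxa : x a ≠ 0 := by simpa [hs] using ha
      have hxb : x b ≠ 0 := by simpa [hs] using hb
      obtain ⟨u, v, huv, hadj', hv', hle'⟩ :
          ∃ u v, u ≠ v ∧ G.Adj u v ∧ x v ≠ 0 ∧ x u ≠ 0 ∧
            ((1 + G.adjMatrix ℝ) *ᵥ x) v ≤ ((1 + G.adjMatrix ℝ) *ᵥ x) u := by
        rcases le_total (((1 + G.adjMatrix ℝ) *ᵥ x) a) (((1 + G.adjMatrix ℝ) *ᵥ x) b) with h | h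
        · exact ⟨b, a, hab.symm, hadj.symm, hxa, hxb, h⟩
        · exact ⟨a, b, hab, hadj, hxb, hxa, h⟩
      obtain ⟨hxu, hle''⟩ := hle'
      obtain ⟨y, hy, hyu, hysupp, hyQ⟩ := shift_step' G x hx u v huv hadj' hv' hle''
      have hsub : (Finset.univ.filter fun i => y i ≠ 0) ⊆ s.erase u := by
        intro i hi
        simp only [Finset.mem_filter, Finset.mem_univ, true_and] at hi
        refine Finset.mem_erase.mpr ⟨?_, ?_⟩
        · rintro rfl; exact hi hyu
        · simp [hs, hysupp i hi]
      have hcard' : (Finset.univ.filter fun i => y i ≠ 0).card ≤ N := by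
        have h1 : (s.erase u).card = s.card - 1 := Finset.card_erase_of_mem (by simp [hs, hxu])
        have h2 : 1 ≤ s.card := Finset.card_pos.mpr ⟨u, by simp [hs, hxu]⟩
        have := Finset.card_le_card hsub
        omega
      obtain ⟨t, ht1, ht2, ht3⟩ := ih y hy hcard'
      exact ⟨t, ht1, ht2, le_trans ht3 hyQ⟩

private lemma eigen_quad' (Bc : Matrix (Fin n ⊕ Fin 1) (Fin n ⊕ Fin 1) ℂ)
    (vR πR : Fin n → ℝ) (r q : ℝ)
    (h11 : ∀ k l, Bc (Sum.inl k) (Sum.inl l) = 0)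
    (h12 : ∀ k e, Bc (Sum.inl k) (Sum.inr e) = (vR k : ℂ))
    (h21 : ∀ e l, Bc (Sum.inr e) (Sum.inl l) = (πR l : ℂ))
    (h22 : ∀ e e', Bc (Sum.inr e) (Sum.inr e') = (r : ℂ))
    (hq : ∑ l, (πR l : ℂ) * (vR l : ℂ) = (q : ℂ))
    (μ : ℂ) (hμ : μ ∈ spectrum ℂ Bc) : μ = 0 ∨ μ ^ 2 = (r : ℂ) * μ + (q : ℂ) := by
  obtain ⟨w, hw0, hw⟩ := (spec_iff' Bc μ).mp hμ
  set t := w (Sum.inr 0) with hts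
  have h1 : ∀ k, (vR k : ℂ) * t = μ * w (Sum.inl k) := by
    intro k
    have := congrFun hw (Sum.inl k)
    simpa [Matrix.mulVec, dotProduct, Fintype.sum_sum_type, h11, h12,
      Fin.sum_univ_one] using this
  have h2 : (∑ l, (πR l : ℂ) * w (Sum.inl l)) + (r : ℂ) * t = μ * t := by
    have := congrFun hw (Sum.inr 0)
    simpa [Matrix.mulVec, dotProduct, Fintype.sum_sum_type, h21, h22,
      Fin.sum_univ_one] using this
  rcases eq_or_ne μ 0 with rfl | hμ0
  · exact Or.inl rfl
  right
  have ht : t ≠ 0 := by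
    intro ht0
    apply hw0
    funext y
    rcases y with k | e
    · have := h1 k
      rw [ht0, mul_zero] at this
      have := (mul_eq_zero.mp this.symm).resolve_left hμ0
      simpa using this
    · have : e = 0 := Subsingleton.elim e 0
      rw [this]
      simpa using ht0.symm ▸ (by simp [hts] : w (Sum.inr 0) = t)
  have key : μ * ((∑ l, (πR l : ℂ) * w (Sum.inl l)) + (r : ℂ) * t) = μ * (μ * t) := by
    rw [h2]
  have hsum : μ * ∑ l, (πR l : ℂ) * w (Sum.inl l) = (q : ℂ) * t := by
    rw [Finset.mul_sum]
    have heach : ∀ l, μ * ((πR l : ℂ) * w (Sum.inl l)) = (πR l : ℂ) * (vR l : ℂ) * t := by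
      intro l
      linear_combination (-(πR l : ℂ)) * (h1 l)
    rw [Finset.sum_congr rfl fun l _ => heach l, ← Finset.sum_mul, hq]
  have hfin : μ ^ 2 * t = ((r : ℂ) * μ + (q : ℂ)) * t := by
    linear_combination hsum - key
  exact mul_right_cancel₀ ht hfin

private lemma eigen_exists' (Bc : Matrix (Fin n ⊕ Fin 1) (Fin n ⊕ Fin 1) ℂ)
    (vR πR : Fin n → ℝ) (r q lam : ℝ)
    (h11 : ∀ k l, Bc (Sum.inl k) (Sum.inl l) = 0)
    (h12 : ∀ k e, Bc (Sum.inl k) (Sum.inr e) = (vR k : ℂ))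
    (h21 : ∀ e l, Bc (Sum.inr e) (Sum.inl l) = (πR l : ℂ))
    (h22 : ∀ e e', Bc (Sum.inr e) (Sum.inr e') = (r : ℂ))
    (hq : ∑ l, (πR l : ℂ) * (vR l : ℂ) = (q : ℂ))
    (hlam : lam ^ 2 = r * lam + q) (hlam0 : lam ≠ 0) :
    ((lam : ℂ)) ∈ spectrum ℂ Bc := by
  rw [spec_iff']
  refine ⟨Sum.elim (fun k => (vR k : ℂ)) (fun _ => (lam : ℂ)), ?_, ?_⟩
  · intro h
    have := congrFun h (Sum.inr 0)
    simp at this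
    exact hlam0 this
  · funext y
    rcases y with k | e
    · simp [Matrix.mulVec, dotProduct, Fintype.sum_sum_type, h11, h12,
        Fin.sum_univ_one]
      ring
    · have hcast : ((lam : ℂ)) ^ 2 = (r : ℂ) * (lam : ℂ) + (q : ℂ) := by
        have := congrArg (Complex.ofReal) hlam
        push_cast at this
        exact_mod_cast this
      simp only [Matrix.mulVec, dotProduct, Fintype.sum_sum_type, h21, h22,
        Fin.sum_univ_one, Sum.elim_inl, Sum.elim_inr, Pi.smul_apply, smul_eq_mul]
      rw [hq]
      linear_combination -hcast

end Helpers

theorem min_spectral_radius_iff_indep (n : ℕ) (G : SimpleGraph (Fin n)) [DecidableRel G.Adj]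
    (C : Matrix (Fin n) (Fin n) ℝ) (hC : C = G.adjMatrix ℝ)
    (j : ℕ) (hj : 2 ≤ j) (r : ℝ) (hr : r = 1 - 1 / ((j : ℝ) - 1))
    (A : Fin n → Matrix (Fin n ⊕ Fin 1) (Fin n ⊕ Fin 1) ℝ)
    (hA : ∀ i, A i = Matrix.fromBlocks 0
      (Matrix.replicateCol (Fin 1) (fun k => (Pi.single i 1 : Fin n → ℝ) k + C k i))
      (Matrix.replicateRow (Fin 1) (Pi.single i (1 : ℝ))) (Matrix.of fun _ _ => r)) :
    (∃ π ∈ stdSimplex ℝ (Fin n),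
        ∀ μ ∈ spectrum ℂ ((∑ i, π i • A i).map (algebraMap ℝ ℂ)), ‖μ‖ < 1) ↔
      ∃ s : Finset (Fin n), j ≤ s.card ∧
        (↑s : Set (Fin n)).Pairwise fun a b => ¬ G.Adj a b := by
  have hj1 : (1:ℝ) ≤ (j:ℝ) - 1 := by
    have : (2:ℝ) ≤ (j:ℝ) := by exact_mod_cast hj
    linarith
  have hjpos : (0:ℝ) < (j:ℝ) - 1 := by linarith
  have hr0 : 0 ≤ r := by
    rw [hr]
    have : 1 / ((j:ℝ) - 1) ≤ 1 := by
      rw [div_le_one hjpos]; linarith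
    linarith
  have hr1 : r < 1 := by
    rw [hr]
    have : 0 < 1 / ((j:ℝ) - 1) := by positivity
    linarith
  have h1r : 1 - r = ((j:ℝ) - 1)⁻¹ := by
    rw [hr]; field_simp; ring
  -- entry computations for B := ∑ i, π i • A i, for any π with ∑ π = 1
  have entries : ∀ π : Fin n → ℝ, (∑ i, π i = 1) →
      (∀ k l, (∑ i, π i • A i) (Sum.inl k) (Sum.inl l) = 0) ∧
      (∀ k e, (∑ i, π i • A i) (Sum.inl k) (Sum.inr e) = ((1 + G.adjMatrix ℝ) *ᵥ π) k) ∧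
      (∀ e l, (∑ i, π i • A i) (Sum.inr e) (Sum.inl l) = π l) ∧
      (∀ e e', (∑ i, π i • A i) (Sum.inr e) (Sum.inr e') = r) := by
    intro π hπ1
    refine ⟨?_, ?_, ?_, ?_⟩
    · intro k l
      simp [Matrix.sum_apply, hA]
    · intro k e
      simp only [Matrix.sum_apply, Matrix.smul_apply, hA, Matrix.fromBlocks_apply₁₂,
        Matrix.replicateCol_apply, smul_eq_mul]
      rw [Matrix.add_mulVec, Matrix.one_mulVec]
      simp only [mul_add, Finset.sum_add_distrib, Pi.add_apply]
      congr 1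
      · simp [Pi.single_apply, mul_ite]
      · simp [Matrix.mulVec, dotProduct, hC, mul_comm]
    · intro e l
      simp only [Matrix.sum_apply, Matrix.smul_apply, hA, Matrix.fromBlocks_apply₂₁,
        Matrix.replicateRow_apply, smul_eq_mul]
      simp [Pi.single_apply, mul_ite]
    · intro e e'
      simp only [Matrix.sum_apply, Matrix.smul_apply, hA, Matrix.fromBlocks_apply₂₂,
        Matrix.of_apply, smul_eq_mul]
      rw [← Finset.sum_mul, hπ1, one_mul]
  have centries : ∀ π : Fin n → ℝ, (∑ i, π i = 1) →
      (∀ k l, ((∑ i, π i • A i).map (algebraMap ℝ ℂ)) (Sum.inl k) (Sum.inl l) = 0) ∧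
      (∀ k e, ((∑ i, π i • A i).map (algebraMap ℝ ℂ)) (Sum.inl k) (Sum.inr e)
        = ((((1 + G.adjMatrix ℝ) *ᵥ π) k : ℝ) : ℂ)) ∧
      (∀ e l, ((∑ i, π i • A i).map (algebraMap ℝ ℂ)) (Sum.inr e) (Sum.inl l) = ((π l : ℝ) : ℂ)) ∧
      (∀ e e', ((∑ i, π i • A i).map (algebraMap ℝ ℂ)) (Sum.inr e) (Sum.inr e') = ((r : ℝ) : ℂ)) := by
    intro π hπ1
    obtain ⟨e11, e12, e21, e22⟩ := entries π hπ1
    refine ⟨fun k l => ?_, fun k e => ?_, fun e l => ?_, fun e e' => ?_⟩ <;>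
      simp [Matrix.map_apply, e11, e12, e21, e22, Complex.coe_algebraMap]
  constructor
  · -- forward
    rintro ⟨π, hπ, hspec⟩
    set vR := (1 + G.adjMatrix ℝ) *ᵥ π with hvR
    set q := π ⬝ᵥ vR with hqdef
    have hsq : ∑ i, π i ^ 2 ≤ q := Q_ge_sq' G π hπ.1
    have hq0 : 0 < q := by
      have hex : ∃ i, π i ≠ 0 := by
        by_contra h
        push_neg at h
        have := hπ.2
        rw [Finset.sum_congr rfl fun i _ => h i] at this
        simp at this
      obtain ⟨i, hi⟩ := hex
      have : 0 < ∑ i, π i ^ 2 :=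
        Finset.sum_pos' (fun i _ => sq_nonneg _) ⟨i, Finset.mem_univ i,
          pow_two_pos_of_ne_zero hi⟩
      linarith
    have hqc : ∑ l, (π l : ℂ) * (vR l : ℂ) = (q : ℂ) := by
      have : q = ∑ l, π l * vR l := rfl
      rw [this]
      push_cast
      rfl
    have hs0 : (0:ℝ) ≤ r ^ 2 + 4 * q := by nlinarith
    set sq2 := Real.sqrt (r ^ 2 + 4 * q) with hsq2def
    have hsq2 : sq2 ^ 2 = r ^ 2 + 4 * q := Real.sq_sqrt hs0
    have hsq2pos : 0 < sq2 := Real.sqrt_pos.mpr (by nlinarith)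
    set lam := (r + sq2) / 2 with hlamdef
    have hlam : lam ^ 2 = r * lam + q := by
      rw [hlamdef]
      linear_combination hsq2 / 4
    have hlampos : 0 < lam := by
      rw [hlamdef]; linarith
    obtain ⟨e11, e12, e21, e22⟩ := centries π hπ.2
    have hmem := eigen_exists' _ vR π r q lam e11 e12 e21 e22 hqc hlam (ne_of_gt hlampos)
    have hnorm := hspec _ hmem
    rw [Complex.norm_real, Real.norm_eq_abs, abs_of_pos hlampos] at hnorm
    have hq1 : q < 1 - r := by
      have h2r : sq2 < 2 - r := by rw [hlamdef] at hnorm; linarith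
      nlinarith
    obtain ⟨s, hsne, hspair, hsle⟩ := descent' G
      (Finset.univ.filter fun i => π i ≠ 0).card π hπ le_rfl
    refine ⟨s, ?_, hspair⟩
    have hcpos : (0:ℝ) < s.card := by exact_mod_cast Finset.card_pos.mpr hsne
    have hlt : ((s.card : ℝ))⁻¹ < ((j:ℝ) - 1)⁻¹ := by
      rw [← h1r]
      exact lt_of_le_of_lt hsle hq1
    have : (j:ℝ) - 1 < s.card := by
      exact (inv_lt_inv₀ hcpos hjpos).mp hlt
    have : (j:ℝ) < (s.card : ℝ) + 1 := by linarith
    have : j < s.card + 1 := by exact_mod_cast this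
    omega
  · -- backward
    rintro ⟨s, hcard, hpair⟩
    obtain ⟨t, hts, htcard⟩ := Finset.exists_subset_card_eq hcard
    have htpair : (↑t : Set (Fin n)).Pairwise fun a b => ¬ G.Adj a b :=
      hpair.mono (by exact_mod_cast hts)
    have hjR : (0:ℝ) < (j:ℝ) := by linarith
    set π : Fin n → ℝ := fun i => if i ∈ t then (j:ℝ)⁻¹ else 0 with hπdef
    have hπ1 : ∑ i, π i = 1 := by
      rw [hπdef]
      rw [Finset.sum_ite_mem, Finset.univ_inter, Finset.sum_const, htcard, nsmul_eq_mul]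
      field_simp
    have hπmem : π ∈ stdSimplex ℝ (Fin n) := by
      refine ⟨fun i => ?_, hπ1⟩
      rw [hπdef]
      dsimp only
      split
      · positivity
      · exact le_refl 0
    set vR := (1 + G.adjMatrix ℝ) *ᵥ π with hvR
    have hvt : ∀ k ∈ t, vR k = (j:ℝ)⁻¹ := by
      intro k hk
      rw [hvR, Matrix.add_mulVec, Matrix.one_mulVec]
      have hπk : π k = (j:ℝ)⁻¹ := by rw [hπdef]; simp [hk]
      have hadj : (G.adjMatrix ℝ *ᵥ π) k = 0 := by
        simp only [Matrix.mulVec, dotProduct]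
        refine Finset.sum_eq_zero fun i _ => ?_
        rw [hπdef]
        dsimp only
        by_cases hi : i ∈ t
        · rw [if_pos hi]
          have : G.adjMatrix ℝ k i = 0 := by
            rcases eq_or_ne k i with rfl | hne
            · simp
            · have := htpair hk hi hne
              simp [this]
          rw [this, zero_mul]
        · rw [if_neg hi, mul_zero]
      simp [hπk, hadj]
    have hq : π ⬝ᵥ vR = (j:ℝ)⁻¹ := by
      rw [dotProduct]
      have : ∀ k, π k * vR k = if k ∈ t then (j:ℝ)⁻¹ * (j:ℝ)⁻¹ else 0 := by
        intro k
        by_cases hk : k ∈ t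
        · rw [if_pos hk, hvt k hk]
          rw [hπdef]; simp [hk]
        · rw [if_neg hk, hπdef]; simp [hk]
      rw [Finset.sum_congr rfl fun k _ => this k, Finset.sum_ite_mem, Finset.univ_inter,
        Finset.sum_const, htcard, nsmul_eq_mul]
      field_simp
    have hqc : ∑ l, (π l : ℂ) * (vR l : ℂ) = (((j:ℝ)⁻¹ : ℝ) : ℂ) := by
      have : π ⬝ᵥ vR = ∑ l, π l * vR l := rfl
      rw [this] at hq
      rw [← hq]
      push_cast
      rfl
    refine ⟨π, hπmem, ?_⟩
    intro μ hμ
    obtain ⟨e11, e12, e21, e22⟩ := centries π hπ1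
    rcases eigen_quad' _ vR π r ((j:ℝ)⁻¹) e11 e12 e21 e22 hqc μ hμ with rfl | hquad
    · simp
    · refine quad_bound' r ((j:ℝ)⁻¹) hr0 (by positivity) ?_ μ hquad
      have h2 : ((j:ℝ))⁻¹ < ((j:ℝ) - 1)⁻¹ := (inv_lt_inv₀ hjR hjpos).mpr (by linarith)
      rw [hr, show (1:ℝ) - (1 - 1/((j:ℝ)-1)) = ((j:ℝ)-1)⁻¹ by field_simp; ring]
      exact h2
end

section
/- Let G be a finite simple graph on n vertices with adjacency matrix C (columns c₁,…,cₙ), and let j ≥ 2. Define the (n+1)×(n+1) matrices Aᵢ = [[I, −(eᵢ+cᵢ)],[−eᵢᵀ, 1/(j−1)]]. Then there exists a matrix in the convex hull of {A₁,…,Aₙ} all of whose eigenvalues have strictly positive real part if and only if G has an independent set of size at least j. -/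
open Matrix

lemma quad_re_pos {p q : ℝ} (hp : 0 < p) (hq : 0 < q) {z : ℂ}
    (hz : z * z - (p : ℂ) * z + (q : ℂ) = 0) : 0 < z.re := by
  have him : z.im * (2 * z.re - p) = 0 := by
    have h := congrArg Complex.im hz
    simp [Complex.mul_im, Complex.add_im, Complex.sub_im, Complex.ofReal_im,
      Complex.ofReal_re] at h
    ring_nf
    ring_nf at h
    linarith
  have hre := congrArg Complex.re hz
  simp [Complex.mul_re, Complex.add_re, Complex.sub_re, Complex.ofReal_im,
    Complex.ofReal_re] at hre
  rcases mul_eq_zero.1 him with h0 | h0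
  · -- z real
    rw [h0] at hre
    nlinarith [hre]
  · nlinarith [h0]

section MS
variable {n : ℕ} (G : SimpleGraph (Fin n)) [DecidableRel G.Adj]

local notation "M" => (1 + G.adjMatrix ℝ : Matrix (Fin n) (Fin n) ℝ)

lemma Msymm (x y : Fin n) : (M) x y = (M) y x := by
  simp only [Matrix.add_apply, Matrix.one_apply, SimpleGraph.adjMatrix_apply]
  congr 1
  · simp [eq_comm]
  · simp [G.adj_comm]

lemma Mapply_nonneg (x y : Fin n) : 0 ≤ (M) x y := by
  simp only [Matrix.add_apply, Matrix.one_apply, SimpleGraph.adjMatrix_apply]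
  positivity

lemma Q_nonneg {π : Fin n → ℝ} (hπ : ∀ i, 0 ≤ π i) : 0 ≤ π ⬝ᵥ ((M) *ᵥ π) := by
  apply Finset.sum_nonneg
  intro i _
  apply mul_nonneg (hπ i)
  simp only [Matrix.mulVec, dotProduct]
  apply Finset.sum_nonneg
  intro k _
  exact mul_nonneg (Mapply_nonneg G i k) (hπ k)

lemma Q_ge_sum_sq {π : Fin n → ℝ} (hπ : ∀ i, 0 ≤ π i) (s : Finset (Fin n)) :
    ∑ i ∈ s, π i ^ 2 ≤ π ⬝ᵥ ((M) *ᵥ π) := by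
  have h1 : π ⬝ᵥ ((M) *ᵥ π) = ∑ i, π i ^ 2 + π ⬝ᵥ (G.adjMatrix ℝ *ᵥ π) := by
    rw [Matrix.add_mulVec, Matrix.one_mulVec, dotProduct_add]
    congr 1
    simp [dotProduct, sq]
  rw [h1]
  have h2 : 0 ≤ π ⬝ᵥ (G.adjMatrix ℝ *ᵥ π) := by
    apply Finset.sum_nonneg
    intro i _
    apply mul_nonneg (hπ i)
    simp only [Matrix.mulVec, dotProduct]
    apply Finset.sum_nonneg
    intro k _
    apply mul_nonneg _ (hπ k)
    simp only [SimpleGraph.adjMatrix_apply]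
    positivity
  have h3 : ∑ i ∈ s, π i ^ 2 ≤ ∑ i, π i ^ 2 :=
    Finset.sum_le_sum_of_subset_of_nonneg (Finset.subset_univ s) (by intro i _ _; positivity)
  linarith

end MS

section MS2
variable {n : ℕ} (G : SimpleGraph (Fin n)) [DecidableRel G.Adj]
local notation "M" => (1 + G.adjMatrix ℝ : Matrix (Fin n) (Fin n) ℝ)

lemma kill_step {π : Fin n → ℝ} (hπ : ∀ i, 0 ≤ π i) (hsum : ∑ i, π i = 1)
    {u v : Fin n} (huv : G.Adj u v) (hu : π u ≠ 0) (hv : π v ≠ 0)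
    (hw : ((M) *ᵥ π) v ≤ ((M) *ᵥ π) u) :
    ∃ π' : Fin n → ℝ, (∀ i, 0 ≤ π' i) ∧ (∑ i, π' i = 1) ∧
      π' ⬝ᵥ ((M) *ᵥ π') ≤ π ⬝ᵥ ((M) *ᵥ π) ∧
      (Finset.univ.filter fun i => π' i ≠ 0) ⊆ (Finset.univ.filter fun i => π i ≠ 0).erase u := by
  have hne : u ≠ v := G.ne_of_adj huv
  set t := π u with ht
  set d : Fin n → ℝ := Pi.single v 1 - Pi.single u 1 with hd
  have hdu : d u = -1 := by simp [hd, Pi.single_apply, hne.symm]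
  have hdv : d v = 1 := by simp [hd, Pi.single_apply, hne]
  have hdo : ∀ i, i ≠ u → i ≠ v → d i = 0 := by
    intro i hiu hiv; simp [hd, Pi.single_apply, hiu, hiv]
  have hMd : (M) *ᵥ d = fun k => (M) k v - (M) k u := by
    rw [hd, Matrix.mulVec_sub, Matrix.mulVec_single, Matrix.mulVec_single]
    funext k; simp
  have hs : ∀ x : Fin n, π ⬝ᵥ (fun k => (M) k x) = ((M) *ᵥ π) x := by
    intro x
    simp only [dotProduct, Matrix.mulVec]
    apply Finset.sum_congr rfl
    intro k _
    beta_reduce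
    rw [Msymm G k x]; ring
  have hπMd : π ⬝ᵥ ((M) *ᵥ d) = ((M) *ᵥ π) v - ((M) *ᵥ π) u := by
    rw [hMd]
    have : (fun k => (M) k v - (M) k u) = (fun k => (M) k v) - (fun k => (M) k u) := rfl
    rw [this, dotProduct_sub, hs, hs]
  have hdMπ : d ⬝ᵥ ((M) *ᵥ π) = ((M) *ᵥ π) v - ((M) *ᵥ π) u := by
    rw [hd, sub_dotProduct, single_dotProduct, single_dotProduct]
    ring
  have hMuu : (M) u u = 1 := by simp
  have hMvv : (M) v v = 1 := by simp
  have hMuv : (M) u v = 1 := by simp [Matrix.one_apply_ne hne, huv]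
  have hMvu : (M) v u = 1 := by simp [Matrix.one_apply_ne hne.symm, G.adj_symm huv]
  have hdMd : d ⬝ᵥ ((M) *ᵥ d) = 0 := by
    rw [hMd, hd, sub_dotProduct, single_dotProduct, single_dotProduct]
    simp only [hMuu, hMvv, hMuv, hMvu]
    ring
  refine ⟨π + t • d, ?_, ?_, ?_, ?_⟩
  · intro i
    by_cases hiu : i = u
    · subst hiu; simp [hdu, ht]
    · by_cases hiv : i = v
      · rw [hiv]; simp only [Pi.add_apply, Pi.smul_apply, hdv, smul_eq_mul, mul_one]
        have h1 := hπ v; have h2 := hπ u; rw [ht]; linarith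
      · simp [hdo i hiu hiv, hπ i]
  · have : ∑ i, d i = 0 := by
      rw [hd]
      simp [Finset.sum_sub_distrib, Pi.single_apply]
    simp only [Pi.add_apply, Pi.smul_apply, smul_eq_mul, Finset.sum_add_distrib,
      ← Finset.mul_sum, hsum, this, mul_zero, add_zero]
  · have expand : (π + t • d) ⬝ᵥ ((M) *ᵥ (π + t • d)) =
        π ⬝ᵥ ((M) *ᵥ π) + t * (π ⬝ᵥ ((M) *ᵥ d)) + t * (d ⬝ᵥ ((M) *ᵥ π)) +
          t * t * (d ⬝ᵥ ((M) *ᵥ d)) := by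
      rw [Matrix.mulVec_add, Matrix.mulVec_smul, dotProduct_add, add_dotProduct,
        add_dotProduct, dotProduct_smul, smul_dotProduct,
        smul_dotProduct, dotProduct_smul]
      simp only [smul_eq_mul]
      ring
    rw [expand, hπMd, hdMπ, hdMd]
    have h1 : 0 ≤ t := hπ u
    have h2 : ((M) *ᵥ π) v - ((M) *ᵥ π) u ≤ 0 := by linarith
    nlinarith
  · intro i hi
    simp only [Finset.mem_filter, Finset.mem_univ, true_and, Pi.add_apply, Pi.smul_apply,
      smul_eq_mul] at hi
    rw [Finset.mem_erase, Finset.mem_filter]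
    by_cases hiu : i = u
    · exfalso; subst hiu; rw [hdu] at hi
      exact hi (by rw [ht]; ring)
    · by_cases hiv : i = v
      · subst hiv; exact ⟨hiu, Finset.mem_univ _, hv⟩
      · rw [hdo i hiu hiv] at hi; simp at hi; exact ⟨hiu, Finset.mem_univ _, hi⟩

end MS2

section MS3
variable {n : ℕ} (G : SimpleGraph (Fin n)) [DecidableRel G.Adj]
local notation "M" => (1 + G.adjMatrix ℝ : Matrix (Fin n) (Fin n) ℝ)

lemma ms_main (j : ℕ) (hj : 2 ≤ j) :
    ∀ m : ℕ, ∀ π : Fin n → ℝ, (∀ i, 0 ≤ π i) → (∑ i, π i = 1) →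
      (Finset.univ.filter fun i => π i ≠ 0).card ≤ m →
      π ⬝ᵥ ((M) *ᵥ π) < 1 / ((j : ℝ) - 1) →
      ∃ s : Finset (Fin n), j ≤ s.card ∧
        (↑s : Set (Fin n)).Pairwise fun a b => ¬ G.Adj a b := by
  have hj1 : (0 : ℝ) < (j : ℝ) - 1 := by
    have : (2 : ℝ) ≤ (j : ℝ) := by exact_mod_cast hj
    linarith
  intro m
  induction m with
  | zero =>
    intro π hπ hsum hcard _
    exfalso
    have : ∀ i, π i = 0 := by
      intro i
      by_contra h
      have : i ∈ Finset.univ.filter fun i => π i ≠ 0 := by simp [h]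
      have := Finset.card_pos.mpr ⟨i, this⟩
      omega
    rw [Finset.sum_congr rfl fun i _ => this i] at hsum
    simp at hsum
  | succ m ih =>
    intro π hπ hsum hcard hQ
    set S := Finset.univ.filter fun i => π i ≠ 0 with hS
    by_cases hindep : ∀ u ∈ S, ∀ v ∈ S, u ≠ v → ¬ G.Adj u v
    · refine ⟨S, ?_, ?_⟩
      · -- cardinality bound
        have hs1 : ∑ i ∈ S, π i = 1 := by
          rw [hS, Finset.sum_filter_ne_zero, hsum]
        have hcs : (1 : ℝ) ≤ S.card * ∑ i ∈ S, π i ^ 2 := by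
          have := sq_sum_le_card_mul_sum_sq (s := S) (f := π)
          rw [hs1] at this
          simpa using this
        have hQ2 : ∑ i ∈ S, π i ^ 2 ≤ π ⬝ᵥ ((M) *ᵥ π) := Q_ge_sum_sq G hπ S
        have hc0 : (0 : ℝ) < S.card := by
          by_contra h
          push_neg at h
          have : (S.card : ℝ) = 0 := le_antisymm h (by positivity)
          rw [this, zero_mul] at hcs
          linarith
        have : (j : ℝ) - 1 < S.card := by
          have h1 : (1 : ℝ) ≤ S.card * (π ⬝ᵥ ((M) *ᵥ π)) := by nlinarith
          have h2 : S.card * (π ⬝ᵥ ((M) *ᵥ π)) < S.card * (1 / ((j:ℝ) - 1)) :=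
            (mul_lt_mul_iff_right₀ hc0).mpr hQ
          have h3 : (1 : ℝ) < S.card / ((j:ℝ) - 1) := by
            rw [div_eq_mul_one_div]
            linarith
          rw [lt_div_iff₀ hj1] at h3
          linarith
        have : (j : ℝ) < S.card + 1 := by linarith
        have : j < S.card + 1 := by exact_mod_cast this
        omega
      · intro a ha b hb hab
        exact hindep a (by simpa using ha) b (by simpa using hb) hab
    · push_neg at hindep
      obtain ⟨u, hu, v, hv, huv, hadj⟩ := hindep
      rw [hS, Finset.mem_filter] at hu hv
      rcases le_total (((M) *ᵥ π) v) (((M) *ᵥ π) u) with hw | hw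
      · obtain ⟨π', h1, h2, h3, h4⟩ := kill_step G hπ hsum hadj hu.2 hv.2 hw
        refine ih π' h1 h2 ?_ (lt_of_le_of_lt h3 hQ)
        have := Finset.card_le_card h4
        have h5 : ((Finset.univ.filter fun i => π i ≠ 0).erase u).card < 
            (Finset.univ.filter fun i => π i ≠ 0).card :=
          Finset.card_erase_lt_of_mem (by rw [← hS]; exact Finset.mem_filter.mpr hu)
        rw [← hS] at *
        omega
      · obtain ⟨π', h1, h2, h3, h4⟩ := kill_step G hπ hsum (G.adj_symm hadj) hv.2 hu.2 hw
        refine ih π' h1 h2 ?_ (lt_of_le_of_lt h3 hQ)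
        have := Finset.card_le_card h4
        have h5 : ((Finset.univ.filter fun i => π i ≠ 0).erase v).card < 
            (Finset.univ.filter fun i => π i ≠ 0).card :=
          Finset.card_erase_lt_of_mem (by rw [← hS]; exact Finset.mem_filter.mpr hv)
        rw [← hS] at *
        omega

end MS3

section Spec
variable {n : ℕ} (w π : Fin n → ℝ) (a : ℝ)

noncomputable def MB : Matrix (Fin n ⊕ Fin 1) (Fin n ⊕ Fin 1) ℂ :=
  Matrix.fromBlocks 1 (Matrix.replicateCol (Fin 1) fun k => -((w k : ℂ)))
    (Matrix.replicateRow (Fin 1) fun k => -((π k : ℂ))) (Matrix.of fun _ _ => (a : ℂ))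

lemma shifted (μ : ℂ) :
    μ • (1 : Matrix (Fin n ⊕ Fin 1) (Fin n ⊕ Fin 1) ℂ) - MB w π a =
      Matrix.fromBlocks ((μ - 1) • 1) (Matrix.replicateCol (Fin 1) fun k => (w k : ℂ))
        (Matrix.replicateRow (Fin 1) fun k => (π k : ℂ)) (Matrix.of fun _ _ => μ - (a : ℂ)) := by
  ext x y
  cases x with
  | inl k => cases y with
    | inl l =>
      simp [MB, Matrix.one_apply, Matrix.fromBlocks_apply₁₁, Matrix.sub_apply, Matrix.smul_apply]
      by_cases h : k = l <;> simp [h]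
    | inr l =>
      simp [MB, Matrix.one_apply, Matrix.sub_apply, Matrix.smul_apply]
  | inr k => cases y with
    | inl l =>
      simp [MB, Matrix.one_apply, Matrix.sub_apply, Matrix.smul_apply]
    | inr l =>
      have : k = l := Subsingleton.elim k l
      simp [MB, this, Matrix.one_apply, Matrix.sub_apply, Matrix.smul_apply]

lemma det_shifted (μ : ℂ) (hμ : μ ≠ 1) :
    (μ • (1 : Matrix (Fin n ⊕ Fin 1) (Fin n ⊕ Fin 1) ℂ) - MB w π a).det =
      (μ - 1) ^ n * ((μ - a) - ((π ⬝ᵥ w : ℝ) : ℂ) / (μ - 1)) := by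
  rw [shifted]
  have hne : μ - 1 ≠ 0 := sub_ne_zero.mpr hμ
  haveI : Invertible ((μ - 1) • (1 : Matrix (Fin n) (Fin n) ℂ)) :=
    ⟨(μ - 1)⁻¹ • 1, by rw [smul_mul_smul_comm, one_mul, inv_mul_cancel₀ hne, one_smul],
      by rw [smul_mul_smul_comm, one_mul, mul_inv_cancel₀ hne, one_smul]⟩
  rw [Matrix.det_fromBlocks₁₁]
  have hinv : ⅟((μ - 1) • (1 : Matrix (Fin n) (Fin n) ℂ)) = (μ - 1)⁻¹ • 1 :=
    invOf_eq_right_inv (by rw [smul_mul_smul_comm, one_mul, mul_inv_cancel₀ hne, one_smul])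
  rw [hinv]
  have hdet1 : ((μ - 1) • (1 : Matrix (Fin n) (Fin n) ℂ)).det = (μ - 1) ^ n := by
    simp [Matrix.det_smul]
  rw [hdet1]
  congr 1
  rw [Matrix.mul_smul, Matrix.mul_one, Matrix.smul_mul, Matrix.replicateRow_mul_replicateCol]
  rw [Matrix.det_fin_one]
  have hdot : ((fun k => (π k : ℂ)) ⬝ᵥ fun k => (w k : ℂ)) = ((π ⬝ᵥ w : ℝ) : ℂ) := by
    simp [dotProduct]
  simp only [Matrix.sub_apply, Matrix.smul_apply, Matrix.of_apply, hdot, smul_eq_mul]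
  rw [div_eq_inv_mul]

lemma mem_spectrum_iff_det (μ : ℂ) :
    μ ∈ spectrum ℂ (MB w π a) ↔
      (μ • (1 : Matrix (Fin n ⊕ Fin 1) (Fin n ⊕ Fin 1) ℂ) - MB w π a).det = 0 := by
  rw [spectrum.mem_iff, Algebra.algebraMap_eq_smul_one,
    Matrix.isUnit_iff_isUnit_det, isUnit_iff_ne_zero, not_not]

end Spec

lemma sum_A_map {n : ℕ} (j : ℕ) (C : Matrix (Fin n) (Fin n) ℝ) (π : Fin n → ℝ)
    (hπ1 : ∑ i, π i = 1)
    (A : Fin n → Matrix (Fin n ⊕ Fin 1) (Fin n ⊕ Fin 1) ℝ)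
    (hA : ∀ i, A i = Matrix.fromBlocks 1
      (Matrix.replicateCol (Fin 1) (fun k => -((Pi.single i 1 : Fin n → ℝ) k + C k i)))
      (Matrix.replicateRow (Fin 1) (-(Pi.single i (1 : ℝ))))
      (Matrix.of fun _ _ => 1 / ((j : ℝ) - 1))) :
    (∑ i, π i • A i).map (algebraMap ℝ ℂ) =
      MB ((1 + C) *ᵥ π) π (1 / ((j : ℝ) - 1)) := by
  have hsingle : ∀ k : Fin n, ∑ i, π i * ((Pi.single i 1 : Fin n → ℝ) k) = π k := by
    intro k
    simp [Pi.single_apply, Finset.sum_ite_eq]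
  ext x y
  cases x with
  | inl k => cases y with
    | inl l =>
      simp only [Matrix.map_apply, Matrix.sum_apply, Matrix.smul_apply, hA, smul_eq_mul,
        Matrix.fromBlocks_apply₁₁, MB, Matrix.one_apply]
      by_cases h : k = l <;>
        simp [h, hπ1, ← Finset.sum_mul]
    | inr l =>
      simp only [Matrix.map_apply, Matrix.sum_apply, Matrix.smul_apply, hA, smul_eq_mul,
        Matrix.fromBlocks_apply₁₂, MB, Matrix.replicateCol_apply]
      have : ∑ i, π i * -((Pi.single i 1 : Fin n → ℝ) k + C k i) =
          -(((1 + C) *ᵥ π) k) := by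
        have h2 : ((1 + C) *ᵥ π) k = π k + ∑ i, C k i * π i := by
          simp only [Matrix.add_mulVec, Matrix.one_mulVec, Pi.add_apply]
          congr 1
        rw [h2, ← hsingle k]
        rw [← Finset.sum_add_distrib, ← Finset.sum_neg_distrib]
        apply Finset.sum_congr rfl
        intro i _
        ring
      rw [this]
      push_cast
      norm_num
  | inr k => cases y with
    | inl l =>
      simp only [Matrix.map_apply, Matrix.sum_apply, Matrix.smul_apply, hA, smul_eq_mul,
        Matrix.fromBlocks_apply₂₁, MB, Matrix.replicateRow_apply, Pi.neg_apply]
      have : ∑ i, π i * -((Pi.single i 1 : Fin n → ℝ) l) = -(π l) := by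
        rw [← hsingle l, ← Finset.sum_neg_distrib]
        apply Finset.sum_congr rfl
        intro i _
        ring
      rw [this]
      push_cast
      norm_num
    | inr l =>
      simp only [Matrix.map_apply, Matrix.sum_apply, Matrix.smul_apply, hA, smul_eq_mul,
        Matrix.fromBlocks_apply₂₂, MB, Matrix.of_apply]
      rw [← Finset.sum_mul, hπ1, one_mul]
      simp

theorem M_matrix_in_hull_iff_indep (n : ℕ) (G : SimpleGraph (Fin n)) [DecidableRel G.Adj]
    (C : Matrix (Fin n) (Fin n) ℝ) (hC : C = G.adjMatrix ℝ)
    (j : ℕ) (hj : 2 ≤ j)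
    (A : Fin n → Matrix (Fin n ⊕ Fin 1) (Fin n ⊕ Fin 1) ℝ)
    (hA : ∀ i, A i = Matrix.fromBlocks 1
      (Matrix.replicateCol (Fin 1) (fun k => -((Pi.single i 1 : Fin n → ℝ) k + C k i)))
      (Matrix.replicateRow (Fin 1) (-(Pi.single i (1 : ℝ))))
      (Matrix.of fun _ _ => 1 / ((j : ℝ) - 1))) :
    (∃ π ∈ stdSimplex ℝ (Fin n),
        ∀ μ ∈ spectrum ℂ ((∑ i, π i • A i).map (algebraMap ℝ ℂ)), 0 < μ.re) ↔
      ∃ s : Finset (Fin n), j ≤ s.card ∧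
        (↑s : Set (Fin n)).Pairwise fun a b => ¬ G.Adj a b := by
  subst hC
  have hj1 : (0 : ℝ) < (j : ℝ) - 1 := by
    have : (2 : ℝ) ≤ (j : ℝ) := by exact_mod_cast hj
    linarith
  have hapos : (0 : ℝ) < 1 / ((j : ℝ) - 1) := by positivity
  set a : ℝ := 1 / ((j : ℝ) - 1) with ha
  constructor
  · rintro ⟨π, hπmem, hpos⟩
    obtain ⟨hπ0, hπ1⟩ := hπmem
    have hmap := sum_A_map j (G.adjMatrix ℝ) π hπ1 A hA
    set w := (1 + G.adjMatrix ℝ) *ᵥ π with hw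
    set s := π ⬝ᵥ w with hsdef
    have hs0 : 0 ≤ s := Q_nonneg G hπ0
    have hD0 : (0 : ℝ) ≤ (1 - a) ^ 2 + 4 * s := by positivity
    set r := Real.sqrt ((1 - a) ^ 2 + 4 * s) with hrdef
    have hr2 : r * r = (1 - a) ^ 2 + 4 * s := Real.mul_self_sqrt hD0
    have hr0 : 0 ≤ r := Real.sqrt_nonneg _
    set μ₀ : ℝ := ((1 + a) - r) / 2 with hμ₀def
    have hquad : (μ₀ - 1) * (μ₀ - a) = s := by
      rw [hμ₀def]
      linear_combination (1 / 4 : ℝ) * hr2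
    have key : s < a := by
      by_cases hone : μ₀ = 1
      · rw [hone] at hquad
        simp at hquad
        linarith
      · have hne : μ₀ - 1 ≠ 0 := sub_ne_zero.mpr hone
        have hreal : (μ₀ - a) - s / (μ₀ - 1) = 0 := by
          field_simp
          linear_combination hquad
        have hcx : (((μ₀ : ℂ)) - (a : ℂ)) - ((s : ℂ)) / ((μ₀ : ℂ) - 1) = 0 := by
          exact_mod_cast hreal
        have hdet : (((μ₀ : ℂ)) • (1 : Matrix (Fin n ⊕ Fin 1) (Fin n ⊕ Fin 1) ℂ)
            - MB w π a).det = 0 := by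
          rw [det_shifted w π a (μ₀ : ℂ) (by exact_mod_cast hone)]
          rw [hsdef] at hcx
          rw [hcx, mul_zero]
        have hmem : ((μ₀ : ℂ)) ∈ spectrum ℂ (MB w π a) :=
          (mem_spectrum_iff_det w π a _).mpr hdet
        rw [← hmap] at hmem
        have hμpos := hpos _ hmem
        rw [Complex.ofReal_re] at hμpos
        have hrlt : r < 1 + a := by rw [hμ₀def] at hμpos; linarith
        nlinarith
    exact ms_main G j hj _ π hπ0 hπ1 le_rfl key
  · rintro ⟨t, htcard, htind⟩
    obtain ⟨s', hs't, hs'card⟩ := Finset.exists_subset_card_eq (s := t) (n := j) htcard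
    have hjpos : (0 : ℝ) < (j : ℝ) := by linarith
    set π : Fin n → ℝ := fun i => if i ∈ s' then (1 : ℝ) / j else 0 with hπdef
    have hπ0 : ∀ i, 0 ≤ π i := by
      intro i
      by_cases h : i ∈ s' <;> simp [hπdef, h] <;> positivity
    have hπ1 : ∑ i, π i = 1 := by
      rw [hπdef]
      simp only [Finset.sum_ite_mem, Finset.univ_inter, Finset.sum_const, hs'card,
        nsmul_eq_mul]
      field_simp
    have hCzero : ∀ i ∈ s', ∀ k ∈ s', G.adjMatrix ℝ i k = 0 := by
      intro i hi k hk
      simp only [SimpleGraph.adjMatrix_apply, ite_eq_right_iff, one_ne_zero]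
      intro hadj
      by_cases hik : i = k
      · subst hik; exact G.loopless.irrefl i hadj
      · exact htind (Finset.mem_coe.mpr (hs't hi)) (Finset.mem_coe.mpr (hs't hk)) hik hadj
    have h01 : ∑ i, π i * π i = 1 / (j : ℝ) := by
      have he : ∀ i, π i * π i = if i ∈ s' then (1 / (j : ℝ)) * (1 / (j : ℝ)) else 0 := by
        intro i
        by_cases h : i ∈ s' <;> simp [hπdef, h]
      rw [Finset.sum_congr rfl fun i _ => he i]
      simp only [Finset.sum_ite_mem, Finset.univ_inter, Finset.sum_const, hs'card,
        nsmul_eq_mul]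
      field_simp
    have h02 : ∑ i, π i * ((G.adjMatrix ℝ *ᵥ π) i) = 0 := by
      apply Finset.sum_eq_zero
      intro i _
      by_cases hi : i ∈ s'
      · have hz : (G.adjMatrix ℝ *ᵥ π) i = 0 := by
          simp only [Matrix.mulVec, dotProduct]
          apply Finset.sum_eq_zero
          intro k _
          by_cases hk : k ∈ s'
          · rw [hCzero i hi k hk, zero_mul]
          · rw [hπdef]; simp [hk]
        rw [hz, mul_zero]
      · rw [hπdef]; simp [hi]
    have hQlt : π ⬝ᵥ ((1 + G.adjMatrix ℝ) *ᵥ π) < a := by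
      have hdot : π ⬝ᵥ ((1 + G.adjMatrix ℝ) *ᵥ π) =
          ∑ i, π i * π i + ∑ i, π i * ((G.adjMatrix ℝ *ᵥ π) i) := by
        rw [Matrix.add_mulVec, Matrix.one_mulVec, dotProduct_add]
        rfl
      rw [hdot, h01, h02, add_zero, ha]
      apply one_div_lt_one_div_of_lt hj1
      linarith
    have hmap := sum_A_map j (G.adjMatrix ℝ) π hπ1 A hA
    refine ⟨π, ⟨hπ0, hπ1⟩, ?_⟩
    intro μ hμ
    rw [hmap, mem_spectrum_iff_det] at hμ
    by_cases h1 : μ = 1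
    · rw [h1]; norm_num
    · rw [det_shifted _ _ _ _ h1] at hμ
      have hpow : (μ - 1) ^ n ≠ 0 := pow_ne_zero _ (sub_ne_zero.mpr h1)
      have h2 := (mul_eq_zero.mp hμ).resolve_left hpow
      have hne : μ - 1 ≠ 0 := sub_ne_zero.mpr h1
      set sv : ℝ := π ⬝ᵥ ((1 + G.adjMatrix ℝ) *ᵥ π) with hsv
      have hsv0 : 0 ≤ sv := Q_nonneg G hπ0
      have hz : μ * μ - ((1 + a : ℝ) : ℂ) * μ + ((a - sv : ℝ) : ℂ) = 0 := by
        field_simp at h2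
        rw [ha]
        push_cast
        push_cast at h2
        linear_combination h2
      exact quad_re_pos (by linarith) (by linarith) hz
end

section
/- Let G be a finite simple graph on n vertices with adjacency matrix C (columns c₁,…,cₙ), and let j ≥ 2. Define the (n+1)×(n+1) matrices Aᵢ = [[−I, eᵢ+cᵢ],[eᵢᵀ, −1/(j−1)]]. Then there exists a Hurwitz matrix (all eigenvalues with strictly negative real part) in the convex hull of {A₁,…,Aₙ} if and only if G has an independent set of size at least j. -/
open Matrix

lemma spec_iff_eig {m : Type*} [Fintype m] [DecidableEq m] (M : Matrix m m ℂ) (μ : ℂ) :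
    μ ∈ spectrum ℂ M ↔ ∃ v, v ≠ 0 ∧ M *ᵥ v = μ • v := by
  rw [spectrum.mem_iff, Matrix.isUnit_iff_isUnit_det, isUnit_iff_ne_zero, not_not,
    ← Matrix.exists_mulVec_eq_zero_iff]
  constructor
  · rintro ⟨v, hv, h⟩
    refine ⟨v, hv, ?_⟩
    rw [Algebra.algebraMap_eq_smul_one, Matrix.sub_mulVec, Matrix.smul_mulVec,
      Matrix.one_mulVec, sub_eq_zero] at h
    exact h.symm
  · rintro ⟨v, hv, h⟩
    refine ⟨v, hv, ?_⟩
    rw [Algebra.algebraMap_eq_smul_one, Matrix.sub_mulVec, Matrix.smul_mulVec,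
      Matrix.one_mulVec, sub_eq_zero, h]

lemma quad_neg_re (β γ : ℝ) (hβ : 0 < β) (hγ : 0 < γ) (μ : ℂ)
    (h : μ ^ 2 + (β : ℂ) * μ + (γ : ℂ) = 0) : μ.re < 0 := by
  have hre := congrArg Complex.re h
  have him := congrArg Complex.im h
  simp [Complex.add_re, Complex.add_im, Complex.mul_re, Complex.mul_im, pow_two] at hre him
  by_contra hc
  push_neg at hc
  rcases eq_or_ne μ.im 0 with h0 | h0
  · rw [h0] at hre; nlinarith [hre]
  · have h2 : μ.im * (2 * μ.re + β) = 0 := by linarith [him]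
    rcases mul_eq_zero.mp h2 with h3 | h3
    · exact h0 h3
    · linarith

lemma quad_nonneg_root (β γ : ℝ) (hβ : 0 < β) (hγ : γ ≤ 0) :
    ∃ μ : ℝ, 0 ≤ μ ∧ μ ^ 2 + β * μ + γ = 0 := by
  have hD : (0:ℝ) ≤ β ^ 2 - 4 * γ := by nlinarith
  refine ⟨(Real.sqrt (β ^ 2 - 4 * γ) - β) / 2, ?_, ?_⟩
  · have : β ≤ Real.sqrt (β ^ 2 - 4 * γ) := by
      rw [Real.le_sqrt hβ.le hD]; linarith
    linarith
  · have := Real.sq_sqrt hD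
    nlinarith [this]

lemma spec_char (n : ℕ) (G : SimpleGraph (Fin n)) [DecidableRel G.Adj]
    (j : ℕ) (hj : 2 ≤ j)
    (A : Fin n → Matrix (Fin n ⊕ Fin 1) (Fin n ⊕ Fin 1) ℝ)
    (hA : ∀ i, A i = Matrix.fromBlocks (-1)
      (Matrix.replicateCol (Fin 1) (fun k => (Pi.single i 1 : Fin n → ℝ) k + G.adjMatrix ℝ k i))
      (Matrix.replicateRow (Fin 1) (Pi.single i (1 : ℝ)))
      (Matrix.of fun _ _ => -(1 / ((j : ℝ) - 1))))
    (π : Fin n → ℝ) (hπ : π ∈ stdSimplex ℝ (Fin n)) :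
    ((∀ μ ∈ spectrum ℂ ((∑ i, π i • A i).map (algebraMap ℝ ℂ)), μ.re < 0) ↔
      ∑ k, π k * (π k + ∑ i, π i * G.adjMatrix ℝ k i) < 1 / ((j:ℝ) - 1)) := by
  have hj0 : (0:ℝ) < (j:ℝ) - 1 := by
    have : (2:ℝ) ≤ (j:ℝ) := by exact_mod_cast hj
    linarith
  set c : ℝ := 1 / ((j:ℝ) - 1) with hc
  have hc0 : 0 < c := by positivity
  set M : Matrix (Fin n ⊕ Fin 1) (Fin n ⊕ Fin 1) ℝ := ∑ i, π i • A i with hM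
  set bC : Fin n → ℝ := fun k => π k + ∑ i, π i * G.adjMatrix ℝ k i with hbC
  set q : ℝ := ∑ k, π k * bC k with hq
  -- entry computations
  have hentry : ∀ p r, M p r = ∑ i, π i * A i p r := by
    intro p r
    rw [hM, Matrix.sum_apply]
    simp [Matrix.smul_apply]
  have hM11 : ∀ k l, M (Sum.inl k) (Sum.inl l) = -(if k = l then (1:ℝ) else 0) := by
    intro k l
    rw [hentry]
    have h1 : ∀ i, A i (Sum.inl k) (Sum.inl l) = -(if k = l then (1:ℝ) else 0) := by
      intro i; rw [hA i]
      simp [Matrix.fromBlocks_apply₁₁, Matrix.one_apply]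
    simp_rw [h1]
    rw [← Finset.sum_mul, hπ.2, one_mul]
  have hM12 : ∀ k (o : Fin 1), M (Sum.inl k) (Sum.inr o) = bC k := by
    intro k o
    rw [hentry]
    have h1 : ∀ i, A i (Sum.inl k) (Sum.inr o) = (Pi.single i 1 : Fin n → ℝ) k + G.adjMatrix ℝ k i := by
      intro i; rw [hA i]
      simp [Matrix.fromBlocks_apply₁₂]
    simp_rw [h1]
    rw [hbC]
    simp only [mul_add, Finset.sum_add_distrib]
    congr 1
    simp [Pi.single_apply, mul_ite, Finset.sum_ite_eq]
  have hM21 : ∀ (o : Fin 1) k, M (Sum.inr o) (Sum.inl k) = π k := by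
    intro o k
    rw [hentry]
    have h1 : ∀ i, A i (Sum.inr o) (Sum.inl k) = (Pi.single i 1 : Fin n → ℝ) k := by
      intro i; rw [hA i]
      simp [Matrix.fromBlocks_apply₂₁]
    simp_rw [h1]
    simp [Pi.single_apply, mul_ite, Finset.sum_ite_eq]
  have hM22 : ∀ (o o' : Fin 1), M (Sum.inr o) (Sum.inr o') = -c := by
    intro o o'
    rw [hentry]
    have h1 : ∀ i, A i (Sum.inr o) (Sum.inr o') = -c := by
      intro i; rw [hA i]
      simp [Matrix.fromBlocks_apply₂₂, hc]
    simp_rw [h1]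
    rw [← Finset.sum_mul, hπ.2, one_mul]
  -- mulVec formulas over ℂ
  have hMcl : ∀ (v : Fin n ⊕ Fin 1 → ℂ) (k : Fin n),
      ((M.map (algebraMap ℝ ℂ)) *ᵥ v) (Sum.inl k)
        = -(v (Sum.inl k)) + (bC k : ℂ) * v (Sum.inr 0) := by
    intro v k
    simp only [Matrix.mulVec, dotProduct, Matrix.map_apply]
    rw [Fintype.sum_sum_type]
    simp only [Fin.sum_univ_one, hM11, hM12]
    push_cast
    simp [apply_ite, ite_mul, Finset.sum_ite_eq]
  have hMcr : ∀ (v : Fin n ⊕ Fin 1 → ℂ) (o : Fin 1),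
      ((M.map (algebraMap ℝ ℂ)) *ᵥ v) (Sum.inr o)
        = (∑ k, (π k : ℂ) * v (Sum.inl k)) - (c : ℂ) * v (Sum.inr 0) := by
    intro v o
    simp only [Matrix.mulVec, dotProduct, Matrix.map_apply]
    rw [Fintype.sum_sum_type]
    simp only [Fin.sum_univ_one, hM21, hM22]
    push_cast
    simp only [Complex.coe_algebraMap]
    ring
  constructor
  · -- Hurwitz → q < c
    intro hH
    by_contra hqc
    push_neg at hqc
    obtain ⟨μ₀, hμ₀0, hroot⟩ := quad_nonneg_root (1 + c) (c - q) (by linarith) (by linarith)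
    have hμ1 : ((μ₀:ℂ) + 1) ≠ 0 := by
      intro h
      have := congrArg Complex.re h
      simp at this
      linarith
    set v : Fin n ⊕ Fin 1 → ℂ := Sum.elim (fun k => (bC k : ℂ) / ((μ₀:ℂ) + 1)) (fun _ => 1)
      with hv
    have hvne : v ≠ 0 := by
      intro h
      have := congrFun h (Sum.inr 0)
      simp [hv] at this
    have hMv : (M.map (algebraMap ℝ ℂ)) *ᵥ v = (μ₀:ℂ) • v := by
      funext p
      cases p with
      | inl k =>
        rw [hMcl]
        simp only [hv, Sum.elim_inl, Sum.elim_inr, Pi.smul_apply, smul_eq_mul]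
        field_simp
        ring
      | inr o =>
        rw [hMcr]
        have ho : o = 0 := Subsingleton.elim _ _
        simp only [hv, Sum.elim_inl, Sum.elim_inr, Pi.smul_apply, smul_eq_mul, ho]
        have hqsum : (∑ k, (π k : ℂ) * ((bC k : ℂ) / ((μ₀:ℂ) + 1))) = (q:ℂ) / ((μ₀:ℂ)+1) := by
          rw [hq]
          push_cast
          rw [Finset.sum_div]
          refine Finset.sum_congr rfl fun k _ => ?_
          ring
        rw [hqsum]
        have : (q:ℂ) = ((μ₀:ℂ) + 1) * ((μ₀:ℂ) + c) := by
          have : (μ₀:ℝ) ^ 2 + (1 + c) * μ₀ + (c - q) = 0 := hroot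
          have h2 : (q:ℝ) = (μ₀ + 1) * (μ₀ + c) := by nlinarith [this]
          rw [h2]; push_cast; ring
        rw [this]
        field_simp
        ring
    have hspec : (μ₀:ℂ) ∈ spectrum ℂ (M.map (algebraMap ℝ ℂ)) :=
      (spec_iff_eig _ _).mpr ⟨v, hvne, hMv⟩
    have := hH _ hspec
    simp at this
    linarith
  · -- q < c → Hurwitz
    intro hq2 μ hμ
    rw [spec_iff_eig] at hμ
    obtain ⟨v, hv0, hMv⟩ := hμ
    have e1 : ∀ k, -(v (Sum.inl k)) + (bC k:ℂ) * v (Sum.inr 0) = μ * v (Sum.inl k) := by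
      intro k
      rw [← hMcl v k, hMv]
      simp
    have e2 : (∑ k, (π k:ℂ) * v (Sum.inl k)) - (c:ℂ) * v (Sum.inr 0) = μ * v (Sum.inr 0) := by
      rw [← hMcr v 0, hMv]
      simp
    rcases eq_or_ne μ (-1) with rfl | hμ1
    · simp
    · have hμp1 : μ + 1 ≠ 0 := fun h => hμ1 (by linear_combination h)
      have ht : v (Sum.inr 0) ≠ 0 := by
        intro ht0
        apply hv0
        funext p
        cases p with
        | inl k =>
          have := e1 k
          rw [ht0] at this
          have h2 : (μ + 1) * v (Sum.inl k) = 0 := by linear_combination -this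
          simpa [hμp1] using mul_eq_zero.mp h2
        | inr o =>
          have ho : o = 0 := Subsingleton.elim _ _
          rw [ho]; exact ht0
      have hx : ∀ k, (μ + 1) * v (Sum.inl k) = (bC k : ℂ) * v (Sum.inr 0) := by
        intro k
        linear_combination -(e1 k)
      have hkey : μ ^ 2 + ((1 + c : ℝ):ℂ) * μ + ((c - q : ℝ):ℂ) = 0 := by
        have h3 : (μ + 1) * ((∑ k, (π k:ℂ) * v (Sum.inl k)) - (c:ℂ) * v (Sum.inr 0))
            = (μ + 1) * (μ * v (Sum.inr 0)) := by rw [e2]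
        have h4 : (μ + 1) * (∑ k, (π k:ℂ) * v (Sum.inl k)) = (q:ℂ) * v (Sum.inr 0) := by
          rw [Finset.mul_sum, hq]
          push_cast
          rw [Finset.sum_mul]
          refine Finset.sum_congr rfl fun k _ => ?_
          have := hx k
          linear_combination (π k : ℂ) * this
        have h5 : (μ ^ 2 + ((1 + c : ℝ):ℂ) * μ + ((c - q : ℝ):ℂ)) * v (Sum.inr 0) = 0 := by
          push_cast
          linear_combination h4 - h3
        rcases mul_eq_zero.mp h5 with h6 | h6
        · exact h6
        · exact absurd h6 ht
      exact quad_neg_re (1 + c) (c - q) (by linarith) (by linarith) μ hkey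

lemma ms_aux (n : ℕ) (G : SimpleGraph (Fin n)) [DecidableRel G.Adj] :
    ∀ m : ℕ, ∀ x : Fin n → ℝ, x ∈ stdSimplex ℝ (Fin n) →
      (Finset.univ.filter fun k => x k ≠ 0).card ≤ m →
      ∃ s : Finset (Fin n), 0 < s.card ∧
        ((s : Set (Fin n)).Pairwise fun a b => ¬ G.Adj a b) ∧
        (1:ℝ) / s.card ≤ x ⬝ᵥ ((1 + G.adjMatrix ℝ) *ᵥ x) := by
  intro m
  induction m with
  | zero =>
    intro x hx hcard
    exfalso
    have hz : ∀ k, x k = 0 := by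
      intro k
      by_contra hk
      have : k ∈ Finset.univ.filter fun k => x k ≠ 0 := by simp [hk]
      have := Finset.card_pos.mpr ⟨k, this⟩
      omega
    have := hx.2
    simp [hz] at this
  | succ m ih =>
    intro x hx hcard
    set B := (1 : Matrix (Fin n) (Fin n) ℝ) + G.adjMatrix ℝ with hB
    set s₀ := Finset.univ.filter fun k => x k ≠ 0 with hs₀
    have hsum1 : ∑ k ∈ s₀, x k = 1 := by
      rw [hs₀, Finset.sum_filter_ne_zero, hx.2]
    have hs₀pos : 0 < s₀.card := by
      rcases Finset.eq_empty_or_nonempty s₀ with h | h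
      · rw [h] at hsum1; simp at hsum1
      · exact Finset.card_pos.mpr h
    by_cases hind : (↑s₀ : Set (Fin n)).Pairwise fun a b => ¬ G.Adj a b
    · refine ⟨s₀, hs₀pos, hind, ?_⟩
      have h1 : x ⬝ᵥ (B *ᵥ x) = (∑ k, x k ^ 2) + ∑ k, x k * ∑ l, G.adjMatrix ℝ k l * x l := by
        simp only [dotProduct, Matrix.mulVec, dotProduct, hB, Matrix.add_apply,
          Matrix.one_apply]
        rw [← Finset.sum_add_distrib]
        refine Finset.sum_congr rfl fun k _ => ?_
        have hone : ∑ l, ((if k = l then (1:ℝ) else 0) + G.adjMatrix ℝ k l) * x l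
            = x k + ∑ l, G.adjMatrix ℝ k l * x l := by
          simp only [add_mul, Finset.sum_add_distrib, ite_mul, one_mul, zero_mul]
          simp [Finset.sum_ite_eq]
        rw [hone]
        ring
      have h2 : (0:ℝ) ≤ ∑ k, x k * ∑ l, G.adjMatrix ℝ k l * x l := by
        refine Finset.sum_nonneg fun k _ => mul_nonneg (hx.1 k) ?_
        refine Finset.sum_nonneg fun l _ => mul_nonneg ?_ (hx.1 l)
        simp [SimpleGraph.adjMatrix_apply]
        split <;> norm_num
      have h3 : (1:ℝ) ≤ s₀.card * ∑ k ∈ s₀, x k ^ 2 := by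
        have := sq_sum_le_card_mul_sum_sq (s := s₀) (f := x)
        rw [hsum1] at this
        simpa using this
      have h4 : ∑ k ∈ s₀, x k ^ 2 ≤ ∑ k, x k ^ 2 :=
        Finset.sum_le_sum_of_subset_of_nonneg (Finset.subset_univ _)
          (fun k _ _ => sq_nonneg _)
      have hc0 : (0:ℝ) < s₀.card := by exact_mod_cast hs₀pos
      rw [h1, div_le_iff₀ hc0]
      nlinarith [h2, h3, h4]
    · -- there is an edge inside the support
      rw [Set.Pairwise] at hind
      push_neg at hind
      obtain ⟨u, hu, v, hv, hne, hadj⟩ := hind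
      have hu2 : x u ≠ 0 := by
        have := hu; rw [hs₀] at this; simpa using this
      have hv2 : x v ≠ 0 := by
        have := hv; rw [hs₀] at this; simpa using this
      have key : ∀ u v : Fin n, x u ≠ 0 → x v ≠ 0 → u ≠ v → G.Adj u v →
          x ⬝ᵥ (B *ᵥ (Pi.single u 1 - Pi.single v 1)) ≤ 0 →
          ∃ s : Finset (Fin n), 0 < s.card ∧
            ((s : Set (Fin n)).Pairwise fun a b => ¬ G.Adj a b) ∧
            (1:ℝ) / s.card ≤ x ⬝ᵥ (B *ᵥ x) := by
        intro u v hxu hxv huv hadj hD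
        set e : Fin n → ℝ := Pi.single u 1 - Pi.single v 1 with he
        set x' : Fin n → ℝ := x + x v • e with hx'
        have hBsymm : Bᵀ = B := by
          rw [hB, Matrix.transpose_add, Matrix.transpose_one, SimpleGraph.transpose_adjMatrix]
        have hsymm : ∀ y z : Fin n → ℝ, y ⬝ᵥ (B *ᵥ z) = z ⬝ᵥ (B *ᵥ y) := by
          intro y z
          rw [Matrix.dotProduct_mulVec, ← Matrix.mulVec_transpose, hBsymm,
            dotProduct_comm]
        have hee : e ⬝ᵥ (B *ᵥ e) = 0 := by
          rw [he]
          simp only [Matrix.mulVec_sub, Matrix.mulVec_single_one, Matrix.col_apply, sub_dotProduct,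
            dotProduct_sub, single_dotProduct]
          simp only [Pi.sub_apply, mul_one, one_mul]
          have h1 : ∀ a b : Fin n, B a b = (if a = b then 1 else 0) + (if G.Adj a b then 1 else 0) := by
            intro a b; simp [hB, Matrix.add_apply, Matrix.one_apply]
          rw [h1, h1, h1, h1]
          simp [huv, Ne.symm huv, hadj, hadj.symm, G.irrefl]
        have hexp : x' ⬝ᵥ (B *ᵥ x') = x ⬝ᵥ (B *ᵥ x) + 2 * x v * (x ⬝ᵥ (B *ᵥ e)) := by
          rw [hx']
          simp only [Matrix.mulVec_add, Matrix.mulVec_smul, add_dotProduct,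
            dotProduct_add, smul_dotProduct, dotProduct_smul,
            smul_eq_mul]
          rw [hsymm e x, hee]
          ring
        have hle : x' ⬝ᵥ (B *ᵥ x') ≤ x ⬝ᵥ (B *ᵥ x) := by
          rw [hexp]
          nlinarith [hx.1 v, hD]
        have hx'apply : ∀ k, x' k = x k + x v * ((if k = u then 1 else 0) - (if k = v then 1 else 0)) := by
          intro k; simp [hx', he, Pi.single_apply]
        have hx'v : x' v = 0 := by
          rw [hx'apply]
          simp [Ne.symm huv]
        have hx'u : x' u = x u + x v := by
          rw [hx'apply]
          simp [huv]
        have hx'other : ∀ k, k ≠ u → k ≠ v → x' k = x k := by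
          intro k hku hkv
          rw [hx'apply]
          simp [hku, hkv]
        have hx'simplex : x' ∈ stdSimplex ℝ (Fin n) := by
          constructor
          · intro k
            rcases eq_or_ne k v with rfl | hkv
            · rw [hx'v]
            rcases eq_or_ne k u with rfl | hku
            · rw [hx'u]; exact add_nonneg (hx.1 k) (hx.1 v)
            · rw [hx'other k hku hkv]; exact hx.1 k
          · have h5 : ∑ k, x' k = ∑ k, x k + x v * ∑ k, ((if k = u then (1:ℝ) else 0) - (if k = v then 1 else 0)) := by
              simp only [hx'apply]
              rw [Finset.sum_add_distrib, ← Finset.mul_sum]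
            rw [h5, hx.2]
            simp [Finset.sum_sub_distrib]
        have hsupp : (Finset.univ.filter fun k => x' k ≠ 0) ⊆ s₀.erase v := by
          intro k hk
          rw [Finset.mem_filter] at hk
          have hkv : k ≠ v := fun h => hk.2 (h ▸ hx'v)
          rw [Finset.mem_erase]
          refine ⟨hkv, ?_⟩
          rw [hs₀, Finset.mem_filter]
          refine ⟨Finset.mem_univ _, ?_⟩
          rcases eq_or_ne k u with rfl | hku
          · exact hxu
          · rw [← hx'other k hku hkv]; exact hk.2
        have hvmem : v ∈ s₀ := by rw [hs₀, Finset.mem_filter]; exact ⟨Finset.mem_univ _, hxv⟩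
        have hcard' : (Finset.univ.filter fun k => x' k ≠ 0).card ≤ m := by
          have h1 := Finset.card_le_card hsupp
          have h2 : (s₀.erase v).card = s₀.card - 1 := Finset.card_erase_of_mem hvmem
          omega
        obtain ⟨s, hs1, hs2, hs3⟩ := ih x' hx'simplex hcard'
        exact ⟨s, hs1, hs2, le_trans hs3 hle⟩
      rcases le_or_gt (x ⬝ᵥ (B *ᵥ (Pi.single u 1 - Pi.single v 1))) 0 with hD | hD
      · exact key u v hu2 hv2 hne hadj hD
      · refine key v u hv2 hu2 (Ne.symm hne) hadj.symm ?_
        have hneg : (Pi.single v 1 : Fin n → ℝ) - Pi.single u 1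
            = -((Pi.single u 1 : Fin n → ℝ) - Pi.single v 1) := (neg_sub _ _).symm
        rw [hneg, Matrix.mulVec_neg, dotProduct_neg]
        linarith

theorem hurwitz_in_hull_iff_indep (n : ℕ) (G : SimpleGraph (Fin n)) [DecidableRel G.Adj]
    (C : Matrix (Fin n) (Fin n) ℝ) (hC : C = G.adjMatrix ℝ)
    (j : ℕ) (hj : 2 ≤ j)
    (A : Fin n → Matrix (Fin n ⊕ Fin 1) (Fin n ⊕ Fin 1) ℝ)
    (hA : ∀ i, A i = Matrix.fromBlocks (-1)
      (Matrix.replicateCol (Fin 1) (fun k => (Pi.single i 1 : Fin n → ℝ) k + C k i))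
      (Matrix.replicateRow (Fin 1) (Pi.single i (1 : ℝ)))
      (Matrix.of fun _ _ => -(1 / ((j : ℝ) - 1)))) :
    (∃ π ∈ stdSimplex ℝ (Fin n),
        ∀ μ ∈ spectrum ℂ ((∑ i, π i • A i).map (algebraMap ℝ ℂ)), μ.re < 0) ↔
      ∃ s : Finset (Fin n), j ≤ s.card ∧
        (↑s : Set (Fin n)).Pairwise fun a b => ¬ G.Adj a b := by
  subst hC
  have hj2 : (2:ℝ) ≤ (j:ℝ) := by exact_mod_cast hj
  have hj0 : (0:ℝ) < (j:ℝ) - 1 := by linarith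
  constructor
  · rintro ⟨π, hπ, hH⟩
    have hq := (spec_char n G j hj A hA π hπ).mp hH
    have hdot : π ⬝ᵥ ((1 + G.adjMatrix ℝ) *ᵥ π)
        = ∑ k, π k * (π k + ∑ i, π i * G.adjMatrix ℝ k i) := by
      simp only [dotProduct, Matrix.mulVec, Matrix.add_apply, Matrix.one_apply]
      refine Finset.sum_congr rfl fun k _ => ?_
      congr 1
      simp only [add_mul, Finset.sum_add_distrib, ite_mul, one_mul, zero_mul]
      congr 1
      · simp [Finset.sum_ite_eq]
      · exact Finset.sum_congr rfl fun l _ => mul_comm _ _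
    obtain ⟨s, hs1, hs2, hs3⟩ := ms_aux n G _ π hπ le_rfl
    refine ⟨s, ?_, hs2⟩
    rw [hdot] at hs3
    have hcpos : (0:ℝ) < (s.card : ℝ) := by exact_mod_cast hs1
    have hlt : (1:ℝ) / s.card < 1 / ((j:ℝ) - 1) := lt_of_le_of_lt hs3 hq
    rw [div_lt_div_iff₀ hcpos hj0] at hlt
    have : (j:ℝ) < (s.card:ℝ) + 1 := by linarith
    have : j < s.card + 1 := by exact_mod_cast this
    omega
  · rintro ⟨s, hsj, hind⟩
    set π : Fin n → ℝ := fun i => if i ∈ s then ((s.card:ℝ))⁻¹ else 0 with hπdef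
    have hscard : 0 < s.card := by omega
    have hcpos : (0:ℝ) < (s.card:ℝ) := by exact_mod_cast hscard
    have hπ : π ∈ stdSimplex ℝ (Fin n) := by
      constructor
      · intro k
        rw [hπdef]
        dsimp only
        split
        · positivity
        · exact le_refl 0
      · rw [hπdef]
        dsimp only
        rw [Finset.sum_ite_mem, Finset.univ_inter, Finset.sum_const, nsmul_eq_mul,
          mul_inv_cancel₀ (ne_of_gt hcpos)]
    refine ⟨π, hπ, (spec_char n G j hj A hA π hπ).mpr ?_⟩
    have hCz : ∀ k ∈ s, ∀ i, π i * G.adjMatrix ℝ k i = 0 := by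
      intro k hk i
      by_cases his : i ∈ s
      · have hadj : ¬ G.Adj k i := by
          rcases eq_or_ne k i with rfl | hne
          · exact G.irrefl
          · exact hind (Finset.mem_coe.mpr hk) (Finset.mem_coe.mpr his) hne
        simp [SimpleGraph.adjMatrix_apply, hadj]
      · have : π i = 0 := by rw [hπdef]; simp [his]
        rw [this, zero_mul]
    have h1 : ∀ k, π k * (π k + ∑ i, π i * G.adjMatrix ℝ k i)
        = if k ∈ s then ((s.card:ℝ)⁻¹)^2 else 0 := by
      intro k
      by_cases hk : k ∈ s
      · rw [Finset.sum_eq_zero (fun i _ => hCz k hk i), add_zero, if_pos hk]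
        rw [hπdef]
        simp [hk, pow_two]
      · have : π k = 0 := by rw [hπdef]; simp [hk]
        rw [this, zero_mul, if_neg hk]
    have hqval : ∑ k, π k * (π k + ∑ i, π i * G.adjMatrix ℝ k i) = (s.card:ℝ)⁻¹ := by
      simp_rw [h1]
      rw [Finset.sum_ite_mem, Finset.univ_inter, Finset.sum_const, nsmul_eq_mul,
        pow_two, ← mul_assoc, mul_inv_cancel₀ (ne_of_gt hcpos), one_mul]
    rw [hqval, inv_eq_one_div, div_lt_div_iff₀ hcpos hj0]
    have hjR : (j:ℝ) ≤ (s.card:ℝ) := by exact_mod_cast hsj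
    linarith
end
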